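/- arXiv:2501.07698 — 5 statements merged into one kernel-verified Lean document; each statement's English description precedes it below -/
import Mathlib

section
/- The map π sending each homeomorphism g of the circle S¹ to the induced permutation of chords (mapping the chord with endpoints x,y to the chord with endpoints g(x),g(y)) is a group isomorphism from the homeomorphism group Aut(S¹) onto the automorphism group Aut(𝒞) of the circle graph 𝒞. -/
noncomputable section

/-- The unit circle in the complex plane. -/
def S1 : Set ℂ := {z : ℂ | ‖z‖ = 1}

/-- The closed segment in the plane spanned by an unordered pair of points. -/
def chordSegment : Sym2 ℂ → Set ℂ :=
  Sym2.lift ⟨fun a b => segment ℝ a b, fun a b => segment_symm ℝ a b⟩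

/-- A chord of the circle: an unordered pair of two distinct points of `S1`. -/
def Chord : Type := {p : Sym2 ℂ // (∀ z ∈ p, z ∈ S1) ∧ ¬ p.IsDiag}

/-- The circle graph: vertices are the chords of the circle, two distinct chords being
adjacent whenever their segments intersect. -/
def CircleGraph : SimpleGraph Chord where
  Adj C D := C ≠ D ∧ (chordSegment C.1 ∩ chordSegment D.1).Nonempty
  symm := ⟨fun C D ⟨h1, h2⟩ => ⟨h1.symm, by rwa [Set.inter_comm]⟩⟩
  loopless := ⟨fun C h => h.1 rfl⟩

/-!
An automorphism `φ` of `𝒞` is induced by a point map. For adjacent chords `C`, `D`, the chords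
disjoint from both fall into the open arcs cut out by the endpoints of `C` and `D`; two of them
are joined by a path of such chords iff they lie on the same arc. So the graph induced on them
has three components if `C` and `D` touch and four if they cross, and `φ` preserves touching.
Three pairwise touching chords share an endpoint iff some fourth chord touches all three, so
`φ` maps the chords through a point to the chords through a point: this is the point map `f`,
and `φ` sends the chord `x y` to `f x f y`. As `φ` preserves crossings, `f` preserves the
separation of pairs of points, hence maps open arcs to open arcs and is a homeomorphism.
Conversely a homeomorphism preserves separation, because the arcs cut out by two points are
connected, and so induces an automorphism; the two constructions are mutually inverse.
-/

section

open Set Real Topology ComplexConjugate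

namespace CircleGraph

def cis (θ : ℝ) : ℂ := Circle.exp θ

lemma cis_mem (θ : ℝ) : cis θ ∈ S1 := Circle.norm_coe _

lemma cis_add_two_pi (θ : ℝ) : cis (θ + 2 * π) = cis θ := by
  rw [cis, Circle.exp_add_two_pi, cis]

lemma cis_injOn (α : ℝ) : InjOn cis (Ico α (α + 2 * π)) :=
  Circle.coe_injective.comp_injOn (Circle.exp_injOn_Ico (by linarith))

lemma cis_ne_cis {α a b : ℝ} (ha : a ∈ Ico α (α + 2 * π)) (hb : b ∈ Ico α (α + 2 * π))
    (hab : a ≠ b) : cis a ≠ cis b :=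
  fun h => hab (cis_injOn α ha hb h)

lemma exists_cis_eq {z : ℂ} (hz : z ∈ S1) (α : ℝ) : ∃ θ ∈ Ico α (α + 2 * π), cis θ = z := by
  obtain ⟨t, ht⟩ := Circle.exp_surjective (⟨z, mem_sphere_zero_iff_norm.2 hz⟩ : Circle)
  refine ⟨toIcoMod two_pi_pos α t, toIcoMod_mem_Ico _ _ _, ?_⟩
  rw [cis, ← self_sub_toIcoDiv_zsmul, Circle.periodic_exp.sub_zsmul_eq, ht]

lemma exists_cis_eq_of_ne {z : ℂ} (hz : z ∈ S1) {α : ℝ} (hne : z ≠ cis α) :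
    ∃ θ ∈ Ioo α (α + 2 * π), cis θ = z := by
  obtain ⟨θ, ⟨hαθ, hθ⟩, rfl⟩ := exists_cis_eq hz α
  exact ⟨θ, ⟨hαθ.lt_of_ne (by rintro rfl; exact hne rfl), hθ⟩, rfl⟩

lemma infinite_S1 : S1.Infinite :=
  infinite_of_injOn_mapsTo (cis_injOn 0) (fun θ _ => cis_mem θ) (Ico_infinite (by positivity))

/-- Twice the signed area of the triangle `a b z`. -/
def signedArea (a b z : ℂ) : ℝ := (conj (b - a) * (z - a)).im

def Separates (a b c d : ℂ) : Prop := signedArea a b c * signedArea a b d < 0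

lemma signedArea_left (a b : ℂ) : signedArea a b a = 0 := by simp [signedArea]

lemma signedArea_right (a b : ℂ) : signedArea a b b = 0 := by
  simp [signedArea, Complex.mul_im]; ring

lemma signedArea_swap (a b z : ℂ) : signedArea b a z = -signedArea a b z := by
  simp only [signedArea, Complex.mul_im, Complex.conj_re, Complex.conj_im, Complex.sub_re,
    Complex.sub_im]
  ring

lemma separates_swap {a b c d : ℂ} : Separates b a c d ↔ Separates a b c d := by
  rw [Separates, Separates, signedArea_swap a b c, signedArea_swap a b d, neg_mul_neg]

lemma Separates.distinct {a b c d : ℂ} (h : Separates a b c d) :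
    a ≠ b ∧ c ≠ a ∧ c ≠ b ∧ d ≠ a ∧ d ≠ b ∧ c ≠ d := by
  refine ⟨?_, ?_, ?_, ?_, ?_, ?_⟩ <;> rintro rfl
  · simp [Separates, signedArea] at h
  all_goals first
    | exact (mul_self_nonneg _).not_gt h
    | simp [Separates, signedArea_left, signedArea_right] at h

lemma continuous_signedArea (a b : ℂ) : Continuous (signedArea a b) := by
  unfold signedArea; fun_prop

lemma signedArea_lineMap (a b c d : ℂ) (t : ℝ) :
    signedArea a b (AffineMap.lineMap c d t) =
      (1 - t) * signedArea a b c + t * signedArea a b d := by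
  simp only [signedArea, AffineMap.lineMap_apply_module, Complex.real_smul, Complex.mul_im,
    Complex.conj_re, Complex.conj_im, Complex.sub_re, Complex.sub_im, Complex.add_re,
    Complex.add_im, Complex.mul_re, Complex.ofReal_re, Complex.ofReal_im]
  ring

lemma exists_lineMap_eq_of_signedArea_eq_zero {a b z : ℂ} (hab : a ≠ b)
    (h : signedArea a b z = 0) : ∃ t : ℝ, AffineMap.lineMap a b t = z := by
  have hba : (Complex.normSq (b - a) : ℂ) ≠ 0 := by
    exact_mod_cast (Complex.normSq_pos.2 (sub_ne_zero.2 hab.symm)).ne'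
  set w := conj (b - a) * (z - a)
  have hw : (w.re : ℂ) = w := Complex.ext rfl h.symm
  have key : (Complex.normSq (b - a) : ℂ) * (z - a) = w.re * (b - a) := by
    rw [hw, Complex.normSq_eq_conj_mul_self]; ring
  refine ⟨w.re / Complex.normSq (b - a), ?_⟩
  rw [AffineMap.lineMap_apply_module', Complex.real_smul]
  push_cast
  rw [div_mul_eq_mul_div, div_add' _ _ _ hba, div_eq_iff hba]
  linear_combination -key

lemma normSq_lineMap {a b : ℂ} (ha : a ∈ S1) (hb : b ∈ S1) (t : ℝ) :
    Complex.normSq (AffineMap.lineMap a b t) = 1 + t * (t - 1) * Complex.normSq (b - a) := by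
  have ha' : Complex.normSq a = 1 := by simp [Complex.normSq_eq_norm_sq, ha.out]
  have hb' : Complex.normSq b = 1 := by simp [Complex.normSq_eq_norm_sq, hb.out]
  simp only [Complex.normSq_apply, AffineMap.lineMap_apply_module, Complex.real_smul,
    Complex.add_re, Complex.add_im, Complex.sub_re, Complex.sub_im, Complex.mul_re,
    Complex.mul_im, Complex.ofReal_re, Complex.ofReal_im] at *
  linear_combination (1 - t) * ha' + t * hb'

lemma signedArea_eq_zero_iff {a b z : ℂ} (ha : a ∈ S1) (hb : b ∈ S1) (hz : z ∈ S1)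
    (hab : a ≠ b) : signedArea a b z = 0 ↔ z = a ∨ z = b := by
  refine ⟨fun h => ?_, by rintro (rfl | rfl) <;> simp [signedArea_left, signedArea_right]⟩
  obtain ⟨t, rfl⟩ := exists_lineMap_eq_of_signedArea_eq_zero hab h
  have hba : Complex.normSq (b - a) ≠ 0 := by simpa [sub_eq_zero] using hab.symm
  have hz' : Complex.normSq (AffineMap.lineMap a b t) = 1 := by
    simp [Complex.normSq_eq_norm_sq, hz.out]
  rw [normSq_lineMap ha hb] at hz'
  rcases mul_eq_zero.1 (mul_eq_zero.1 (by linarith : t * (t - 1) * Complex.normSq (b - a) = 0)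
    |>.resolve_right hba) with h0 | h1
  · simp [h0]
  · simp [sub_eq_zero.1 h1]

lemma mem_segment_of_signedArea_eq_zero {a b z : ℂ} (ha : a ∈ S1) (hb : b ∈ S1) (hab : a ≠ b)
    (hz : ‖z‖ ≤ 1) (h : signedArea a b z = 0) : z ∈ segment ℝ a b := by
  obtain ⟨t, rfl⟩ := exists_lineMap_eq_of_signedArea_eq_zero hab h
  have hba : 0 < Complex.normSq (b - a) := Complex.normSq_pos.2 (sub_ne_zero.2 hab.symm)
  have hz' : Complex.normSq (AffineMap.lineMap a b t) ≤ 1 := by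
    rw [Complex.normSq_eq_norm_sq]; nlinarith [norm_nonneg (AffineMap.lineMap a b t : ℂ)]
  rw [normSq_lineMap ha hb] at hz'
  have ht : t * (t - 1) ≤ 0 := by nlinarith
  rw [segment_eq_image_lineMap]
  exact ⟨t, ⟨by nlinarith, by nlinarith⟩, rfl⟩

lemma segment_inter_nonempty_of_separates {a b c d : ℂ} (ha : a ∈ S1) (hb : b ∈ S1)
    (hc : c ∈ S1) (hd : d ∈ S1) (hab : a ≠ b) (h : Separates a b c d) :
    (segment ℝ a b ∩ segment ℝ c d).Nonempty := by
  set p := signedArea a b c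
  set q := signedArea a b d
  have h' : p * q < 0 := h
  have hpq : p - q ≠ 0 := fun h0 => by
    rw [sub_eq_zero.1 h0] at h'; exact (mul_self_nonneg q).not_gt h'
  have ht : p / (p - q) ∈ Icc (0 : ℝ) 1 := by
    rcases mul_neg_iff.1 h' with ⟨hp, hq⟩ | ⟨hp, hq⟩
    · exact ⟨div_nonneg hp.le (by linarith), (div_le_one (by linarith)).2 (by linarith)⟩
    · exact ⟨div_nonneg_of_nonpos hp.le (by linarith),
        (div_le_one_of_neg (by linarith)).2 (by linarith)⟩
  have hx : signedArea a b (AffineMap.lineMap c d (p / (p - q))) = 0 := by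
    rw [signedArea_lineMap]; field_simp; ring
  have hxc : AffineMap.lineMap c d (p / (p - q)) ∈ segment ℝ c d := by
    rw [segment_eq_image_lineMap]; exact mem_image_of_mem _ ht
  refine ⟨_, mem_segment_of_signedArea_eq_zero ha hb hab ?_ hx, hxc⟩
  exact (convex_closedBall (0 : ℂ) 1).segment_subset (by simp [hc.out]) (by simp [hd.out]) hxc
    |> mem_closedBall_zero_iff.1

lemma separates_of_segment_inter_nonempty {a b c d : ℂ} (ha : a ∈ S1) (hb : b ∈ S1)
    (hc : c ∈ S1) (hd : d ∈ S1) (hab : a ≠ b) (hca : c ≠ a) (hcb : c ≠ b) (hda : d ≠ a)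
    (hdb : d ≠ b) (h : (segment ℝ a b ∩ segment ℝ c d).Nonempty) : Separates a b c d := by
  obtain ⟨x, hxab, hxcd⟩ := h
  rw [segment_eq_image_lineMap] at hxab hxcd
  obtain ⟨s, -, rfl⟩ := hxab
  obtain ⟨t, ⟨ht0, ht1⟩, hx⟩ := hxcd
  have hp := (signedArea_eq_zero_iff ha hb hc hab).not.2 (by tauto)
  have hq := (signedArea_eq_zero_iff ha hb hd hab).not.2 (by tauto)
  have h0 := signedArea_lineMap a b c d t
  rw [hx, signedArea_lineMap, signedArea_left, signedArea_right] at h0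
  by_contra hns
  rw [Separates, not_lt] at hns
  have hpq : 0 < signedArea a b c * signedArea a b d := hns.lt_of_ne' (mul_ne_zero hp hq)
  rcases ht1.lt_or_eq with ht1 | rfl
  · rcases mul_pos_iff.1 hpq with ⟨hP, hQ⟩ | ⟨hP, hQ⟩ <;> nlinarith
  · exact hq (by linarith)

lemma sin_add_sin_sub_sin_add (x y : ℝ) :
    sin (2 * x) + sin (2 * y) - sin (2 * (x + y)) = 4 * sin x * sin (x + y) * sin y := by
  rw [mul_add, sin_add (2 * x), sin_two_mul, sin_two_mul, cos_two_mul, cos_two_mul, sin_add]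
  linear_combination (-4 * sin y * cos y) * sin_sq_add_cos_sq x
    + (-4 * sin x * cos x) * sin_sq_add_cos_sq y

lemma signedArea_cis (a b c : ℝ) :
    signedArea (cis a) (cis b) (cis c) =
      4 * sin ((b - a) / 2) * sin ((c - a) / 2) * sin ((c - b) / 2) := by
  have hre (θ : ℝ) : (cis θ).re = cos θ := Complex.exp_ofReal_mul_I_re θ
  have him (θ : ℝ) : (cis θ).im = sin θ := Complex.exp_ofReal_mul_I_im θ
  have h := sin_add_sin_sub_sin_add ((b - a) / 2) ((c - b) / 2)
  rw [show (b - a) / 2 + (c - b) / 2 = (c - a) / 2 by ring] at h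
  rw [← h]
  simp only [signedArea, Complex.mul_im, Complex.conj_re, Complex.conj_im, Complex.sub_re,
    Complex.sub_im, hre, him]
  field_simp
  rw [sin_sub, sin_sub, sin_sub]
  ring

lemma sign_sin_half {x : ℝ} (hx : |x| < 2 * π) :
    SignType.sign (sin (x / 2)) = SignType.sign x := by
  rw [abs_lt] at hx
  rcases lt_trichotomy x 0 with h | rfl | h
  · rw [sign_neg h, sign_neg (sin_neg_of_neg_of_neg_pi_lt (by linarith) (by linarith))]
  · simp
  · rw [sign_pos h, sign_pos (sin_pos_of_pos_of_lt_pi (by linarith) (by linarith))]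

lemma abs_sub_lt_two_pi {α a b : ℝ} (ha : a ∈ Ico α (α + 2 * π)) (hb : b ∈ Ico α (α + 2 * π)) :
    |b - a| < 2 * π := by
  rw [abs_sub_lt_iff]; constructor <;> linarith [ha.1, ha.2, hb.1, hb.2]

lemma sign_signedArea_cis {α a b c : ℝ} (ha : a ∈ Ico α (α + 2 * π))
    (hb : b ∈ Ico α (α + 2 * π)) (hc : c ∈ Ico α (α + 2 * π)) :
    SignType.sign (signedArea (cis a) (cis b) (cis c)) =
      SignType.sign ((b - a) * (c - a) * (c - b)) := by
  rw [signedArea_cis, sign_mul, sign_mul, sign_mul, sign_sin_half (abs_sub_lt_two_pi ha hb),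
    sign_sin_half (abs_sub_lt_two_pi ha hc), sign_sin_half (abs_sub_lt_two_pi hb hc),
    sign_pos (by norm_num : (0 : ℝ) < 4), one_mul, sign_mul, sign_mul]

lemma separates_cis_iff {α a b c d : ℝ} (ha : a ∈ Ico α (α + 2 * π))
    (hb : b ∈ Ico α (α + 2 * π)) (hc : c ∈ Ico α (α + 2 * π)) (hd : d ∈ Ico α (α + 2 * π))
    (hab : a ≠ b) :
    Separates (cis a) (cis b) (cis c) (cis d) ↔ (c - a) * (d - a) * ((c - b) * (d - b)) < 0 := by
  rw [Separates, ← sign_eq_neg_one_iff, sign_mul, sign_signedArea_cis ha hb hc,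
    sign_signedArea_cis ha hb hd, ← sign_mul, sign_eq_neg_one_iff]
  have hsq : 0 < (b - a) ^ 2 := by have := sub_ne_zero.2 hab.symm; positivity
  rw [show (b - a) * (c - a) * (c - b) * ((b - a) * (d - a) * (d - b)) =
    (b - a) ^ 2 * ((c - a) * (d - a) * ((c - b) * (d - b))) by ring]
  exact ⟨fun h => neg_of_mul_neg_right h hsq.le, mul_neg_of_pos_of_neg hsq⟩

end CircleGraph

namespace Chord

open CircleGraph

def of (a b : ℂ) (ha : a ∈ S1) (hb : b ∈ S1) (hab : a ≠ b) : Chord :=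
  ⟨s(a, b), by simp [ha, hb], by simpa using hab⟩

@[simp] lemma val_of {a b : ℂ} (ha : a ∈ S1) (hb : b ∈ S1) (hab : a ≠ b) :
    (of a b ha hb hab).1 = s(a, b) := rfl

lemma ext {C D : Chord} (h : C.1 = D.1) : C = D := Subtype.ext h

lemma mem_S1 (C : Chord) {z : ℂ} (hz : z ∈ C.1) : z ∈ S1 := C.2.1 z hz

lemma ne_of_val_eq {C : Chord} {a b : ℂ} (hC : C.1 = s(a, b)) : a ≠ b := by
  have := C.2.2; rwa [hC, Sym2.mk_isDiag_iff] at this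

lemma exists_val_eq (C : Chord) : ∃ a b : S1, C.1 = s((a : ℂ), (b : ℂ)) := by
  obtain ⟨⟨a, b⟩, h⟩ := C
  exact ⟨⟨a, h.1 a (Sym2.mem_mk_left a b)⟩, ⟨b, h.1 b (Sym2.mem_mk_right a b)⟩, rfl⟩

lemma exists_val_eq_of_mem {C : Chord} {z : ℂ} (hz : z ∈ C.1) :
    ∃ w, w ∈ S1 ∧ z ≠ w ∧ C.1 = s(z, w) := by
  obtain ⟨w, hw⟩ := Sym2.mem_iff_exists.1 hz
  exact ⟨w, C.mem_S1 (hw ▸ Sym2.mem_mk_right z w), ne_of_val_eq hw, hw⟩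

lemma eq_of_mem_of_mem {C D : Chord} (hCD : C ≠ D) {z w : ℂ} (hzC : z ∈ C.1) (hzD : z ∈ D.1)
    (hwC : w ∈ C.1) (hwD : w ∈ D.1) : z = w := by
  by_contra hzw
  exact hCD (ext (Sym2.eq_of_ne_mem hzw hzC hwC hzD hwD))

lemma exists_angles_of_notMem {C : Chord} {α : ℝ} (hα : cis α ∉ C.1) :
    ∃ ξ η, α < ξ ∧ ξ < η ∧ η < α + 2 * π ∧ C.1 = s(cis ξ, cis η) := by
  obtain ⟨⟨a, ha⟩, ⟨b, hb⟩, hC⟩ := C.exists_val_eq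
  obtain ⟨ξ, hξ, rfl⟩ := exists_cis_eq_of_ne (α := α) ha (by rintro rfl; simp [hC] at hα)
  obtain ⟨η, hη, rfl⟩ := exists_cis_eq_of_ne (α := α) hb (by rintro rfl; simp [hC] at hα)
  rcases lt_trichotomy ξ η with h | rfl | h
  · exact ⟨ξ, η, hξ.1, h, hη.2, hC⟩
  · exact absurd rfl (ne_of_val_eq hC)
  · exact ⟨η, ξ, hη.1, h, hξ.2, hC.trans Sym2.eq_swap⟩

end Chord

namespace SimpleGraph

variable {V W : Type*} {G : SimpleGraph V} {G' : SimpleGraph W}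

def farFrom (G : SimpleGraph V) (s : Set V) : Set V := {v | ∀ c ∈ s, v ≠ c ∧ ¬ G.Adj v c}

lemma Iso.image_farFrom (φ : G ≃g G') (s : Set V) : φ '' G.farFrom s = G'.farFrom (φ '' s) := by
  ext w
  simp only [farFrom, mem_image, mem_ofPred_eq, forall_exists_index, and_imp,
    forall_apply_eq_imp_iff₂]
  constructor
  · rintro ⟨v, hv, rfl⟩ c hc
    exact ⟨fun h => (hv c hc).1 (φ.injective h), fun h => (hv c hc).2 (φ.map_adj_iff.1 h)⟩
  · intro hw
    refine ⟨φ.symm w, fun c hc => ?_, φ.apply_symm_apply w⟩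
    rw [← φ.apply_symm_apply w] at hw
    exact ⟨fun h => (hw c hc).1 (by rw [h]), fun h => (hw c hc).2 (φ.map_adj_iff.2 h)⟩

def Iso.farFromComponentEquiv (φ : G ≃g G') (s : Set V) :
    (G.induce (G.farFrom s)).ConnectedComponent ≃
      (G'.induce (G'.farFrom (φ '' s))).ConnectedComponent :=
  (φ.induce (φ.image_farFrom s ▸ φ.injective.injOn.bijOn_image)).connectedComponentEquiv

lemma nonempty_connectedComponent_equiv_fin {k : ℕ} (P : Fin k → V → Prop)
    (hne : ∀ i, ∃ v, P i v) (hcover : ∀ v, ∃ i, P i v)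
    (hconn : ∀ i v w, P i v → P i w → G.Reachable v w)
    (hsep : ∀ i j v w, P i v → P j w → (v = w ∨ G.Adj v w) → i = j) :
    Nonempty (G.ConnectedComponent ≃ Fin k) := by
  choose r hr using hne
  have hclosed (i : Fin k) (v w : V) (h : Relation.ReflTransGen G.Adj v w) (hv : P i v) :
      P i w := by
    induction h with
    | refl => exact hv
    | tail _ hadj ih =>
      obtain ⟨j, hj⟩ := hcover _
      rwa [hsep _ _ _ _ ih hj (Or.inr hadj)]
  refine ⟨(Equiv.ofBijective (fun i => G.connectedComponentMk (r i)) ⟨fun i j hij => ?_,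
    ConnectedComponent.ind fun v => ?_⟩).symm⟩
  · exact hsep i j _ _ (hclosed i _ _ ((reachable_iff_reflTransGen _ _).1
      (ConnectedComponent.eq.1 hij)) (hr i)) (hr j) (Or.inl rfl)
  · obtain ⟨i, hi⟩ := hcover v
    exact ⟨i, ConnectedComponent.eq.2 (hconn i _ _ (hr i) hi)⟩

end SimpleGraph

namespace CircleGraph

lemma chordSegment_mk (a b : ℂ) : chordSegment s(a, b) = segment ℝ a b := rfl

lemma adj_of_mem_of_mem {C D : Chord} (hCD : C ≠ D) {z : ℂ} (hzC : z ∈ C.1) (hzD : z ∈ D.1) :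
    CircleGraph.Adj C D := by
  have hz {p : Sym2 ℂ} : z ∈ p → z ∈ chordSegment p := by
    induction p using Sym2.ind with
    | _ x y =>
      rw [Sym2.mem_iff, chordSegment_mk]
      rintro (rfl | rfl)
      exacts [left_mem_segment ℝ _ _, right_mem_segment ℝ _ _]
  exact ⟨hCD, z, hz hzC, hz hzD⟩

lemma adj_iff_separates {C D : Chord} {a b c d : ℂ} (hC : C.1 = s(a, b)) (hD : D.1 = s(c, d))
    (hca : c ≠ a) (hcb : c ≠ b) (hda : d ≠ a) (hdb : d ≠ b) :
    CircleGraph.Adj C D ↔ Separates a b c d := by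
  have hmem (z : ℂ) (hz : z ∈ C.1) := C.mem_S1 hz
  have hmem' (z : ℂ) (hz : z ∈ D.1) := D.mem_S1 hz
  simp only [hC, hD, Sym2.mem_iff, forall_eq_or_imp, forall_eq] at hmem hmem'
  have hCD : C ≠ D := fun h => by simp [h, hD, hca, hcb] at hC
  change (C ≠ D ∧ _) ↔ _
  rw [hC, hD, chordSegment_mk, chordSegment_mk, and_iff_right hCD]
  exact ⟨separates_of_segment_inter_nonempty hmem.1 hmem.2 hmem'.1 hmem'.2
      (Chord.ne_of_val_eq hC) hca hcb hda hdb,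
    segment_inter_nonempty_of_separates hmem.1 hmem.2 hmem'.1 hmem'.2 (Chord.ne_of_val_eq hC)⟩

lemma adj_iff_of_angles {α u v ξ η : ℝ} {C E : Chord} (hC : C.1 = s(cis u, cis v))
    (hE : E.1 = s(cis ξ, cis η)) (hu : u ∈ Ico α (α + 2 * π)) (hv : v ∈ Ico α (α + 2 * π))
    (hξ : ξ ∈ Ico α (α + 2 * π)) (hη : η ∈ Ico α (α + 2 * π))
    (hξu : ξ ≠ u) (hξv : ξ ≠ v) (hηu : η ≠ u) (hηv : η ≠ v) :
    CircleGraph.Adj C E ↔ (ξ - u) * (η - u) * ((ξ - v) * (η - v)) < 0 := by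
  have huv : u ≠ v := fun h => Chord.ne_of_val_eq hC (by rw [h])
  rw [adj_iff_separates hC hE (cis_ne_cis hξ hu hξu) (cis_ne_cis hξ hv hξv)
    (cis_ne_cis hη hu hηu) (cis_ne_cis hη hv hηv), separates_cis_iff hu hv hξ hη huv]

end CircleGraph

namespace CircleGraph

abbrev FarComponents (s : Set Chord) : Type :=
  (CircleGraph.induce (CircleGraph.farFrom s)).ConnectedComponent

def InArc (l r : ℝ) (E : Chord) : Prop :=
  ∃ ξ η, l < ξ ∧ ξ < η ∧ η < r ∧ E.1 = s(cis ξ, cis η)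

lemma mul_pos_of_notMem_Ioo {l r u ξ η : ℝ} (hξ : ξ ∈ Ioo l r) (hη : η ∈ Ioo l r)
    (hu : u ∉ Ioo l r) : 0 < (ξ - u) * (η - u) := by
  rw [mem_Ioo, not_and_or, not_lt, not_lt] at hu
  rcases hu with hu | hu
  · exact mul_pos (by linarith [hξ.1]) (by linarith [hη.1])
  · exact mul_pos_of_neg_of_neg (by linarith [hξ.2]) (by linarith [hη.2])

lemma ne_and_not_adj_of_inArc {α l r u v : ℝ} {C E : Chord} (hl : α ≤ l) (hr : r ≤ α + 2 * π)
    (hE : InArc l r E) (hC : C.1 = s(cis u, cis v)) (hu : u ∈ Ico α (α + 2 * π))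
    (hv : v ∈ Ico α (α + 2 * π)) (hul : u ∉ Ioo l r) (hvl : v ∉ Ioo l r) :
    E ≠ C ∧ ¬ CircleGraph.Adj C E := by
  obtain ⟨ξ, η, hlξ, hξη, hηr, hE⟩ := hE
  have hξ : ξ ∈ Ico α (α + 2 * π) := ⟨by linarith, by linarith⟩
  have hη : η ∈ Ico α (α + 2 * π) := ⟨by linarith, by linarith⟩
  have hξI : ξ ∈ Ioo l r := ⟨hlξ, hξη.trans hηr⟩
  have hηI : η ∈ Ioo l r := ⟨hlξ.trans hξη, hηr⟩
  have hne {w : ℝ} (hw : w ∉ Ioo l r) {θ : ℝ} (hθ : θ ∈ Ioo l r) : θ ≠ w := by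
    rintro rfl; exact hw hθ
  refine ⟨fun h => ?_, ?_⟩
  · have : cis ξ ∈ C.1 := by rw [← h, hE]; exact Sym2.mem_mk_left _ _
    rw [hC, Sym2.mem_iff] at this
    exact this.elim (cis_ne_cis hξ hu (hne hul hξI)) (cis_ne_cis hξ hv (hne hvl hξI))
  · rw [adj_iff_of_angles hC hE hu hv hξ hη (hne hul hξI) (hne hvl hξI) (hne hul hηI)
      (hne hvl hηI), not_lt]
    exact (mul_pos (mul_pos_of_notMem_Ioo hξI hηI hul)
      (mul_pos_of_notMem_Ioo hξI hηI hvl)).le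

lemma ne_and_not_adj_of_inArc_of_le {α l₁ r₁ l₂ r₂ : ℝ} {E F : Chord} (hl : α ≤ l₁)
    (h₁₂ : r₁ ≤ l₂) (hr : r₂ ≤ α + 2 * π) (hE : InArc l₁ r₁ E) (hF : InArc l₂ r₂ F) :
    F ≠ E ∧ ¬ CircleGraph.Adj E F := by
  obtain ⟨ξ, η, hlξ, hξη, hηr, hE'⟩ := id hE
  obtain ⟨ξ', η', hlξ', hξη', hηr', -⟩ := id hF
  exact ne_and_not_adj_of_inArc (by linarith) hr hF hE' ⟨by linarith, by linarith⟩
    ⟨by linarith, by linarith⟩ (fun h => by linarith [h.1]) (fun h => by linarith [h.1])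

lemma exists_inArc {l r : ℝ} (hlr : l < r) (hr : r ≤ l + 2 * π) : ∃ E, InArc l r E := by
  have hξ : (2 * l + r) / 3 ∈ Ico l (l + 2 * π) := ⟨by linarith, by linarith⟩
  have hη : (l + 2 * r) / 3 ∈ Ico l (l + 2 * π) := ⟨by linarith, by linarith⟩
  exact ⟨Chord.of _ _ (cis_mem _) (cis_mem _) (cis_ne_cis hξ hη (by linarith)),
    _, _, by linarith, by linarith, by linarith, rfl⟩

lemma adj_of_interleaved {α τ σ ξ η : ℝ} {E G : Chord} (hE : E.1 = s(cis ξ, cis η))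
    (hG : G.1 = s(cis τ, cis σ)) (hα : α ≤ τ) (hτξ : τ < ξ) (hξσ : ξ < σ) (hση : σ < η)
    (hη : η < α + 2 * π) : CircleGraph.Adj E G := by
  rw [adj_iff_of_angles (α := α) hE hG ⟨by linarith, by linarith⟩ ⟨by linarith, by linarith⟩
    ⟨by linarith, by linarith⟩ ⟨by linarith, by linarith⟩ (by linarith) (by linarith)
    (by linarith) (by linarith)]
  exact mul_neg_of_neg_of_pos (mul_neg_of_neg_of_pos (by linarith) (by linarith))
    (mul_pos_of_neg_of_neg (by linarith) (by linarith))

/-- Both chords cross a chord from a common point of the arc lying before all their endpoints,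
and the chords from a common point touch each other. -/
lemma reachable_of_inArc {s : Set Chord} {l r : ℝ} (hr : r ≤ l + 2 * π)
    (hfar : ∀ E, InArc l r E → E ∈ CircleGraph.farFrom s) {E F : Chord} (hE : InArc l r E)
    (hF : InArc l r F) :
    (CircleGraph.induce (CircleGraph.farFrom s)).Reachable ⟨E, hfar E hE⟩ ⟨F, hfar F hF⟩ := by
  obtain ⟨ξ, η, hlξ, hξη, hηr, hE'⟩ := id hE
  obtain ⟨ξ', η', hlξ', hξη', hηr', hF'⟩ := id hF
  set τ := (l + min ξ ξ') / 2
  have hτ : l < τ ∧ τ < ξ ∧ τ < ξ' := by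
    refine ⟨?_, ?_, ?_⟩ <;> simp only [τ] <;> cases min_cases ξ ξ' <;> linarith
  have hτm {a b : ℝ} (ha : τ < a) (hab : a < b) (hb : b < r) :
      cis τ ≠ cis ((a + b) / 2) :=
    cis_ne_cis (α := l) ⟨hτ.1.le, by linarith⟩ ⟨by linarith, by linarith⟩ (by linarith)
  set GE := Chord.of _ _ (cis_mem _) (cis_mem _) (hτm hτ.2.1 hξη hηr)
  set GF := Chord.of _ _ (cis_mem _) (cis_mem _) (hτm hτ.2.2 hξη' hηr')
  have hGE : InArc l r GE := ⟨τ, _, hτ.1, by linarith, by linarith, rfl⟩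
  have hGF : InArc l r GF := ⟨τ, _, hτ.1, by linarith, by linarith, rfl⟩
  have step {X Y : Chord} (hX : InArc l r X) (hY : InArc l r Y)
      (h : X = Y ∨ CircleGraph.Adj X Y) :
      (CircleGraph.induce (CircleGraph.farFrom s)).Reachable ⟨X, hfar X hX⟩ ⟨Y, hfar Y hY⟩ := by
    rcases h with rfl | h
    exacts [.refl _, SimpleGraph.Adj.reachable h]
  refine ((step hE hGE (.inr (adj_of_interleaved hE' rfl hτ.1.le hτ.2.1 (by linarith)
    (by linarith) (by linarith)))).trans (step hGE hGF ?_)).trans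
    (step hGF hF (.inr (adj_of_interleaved hF' rfl hτ.1.le hτ.2.2 (by linarith) (by linarith)
      (by linarith)).symm))
  by_cases hGG : GE = GF
  exacts [.inl hGG, .inr (adj_of_mem_of_mem hGG (Sym2.mem_mk_left _ _) (Sym2.mem_mk_left _ _))]

section Arcs

variable {k : ℕ} {t : Fin (k + 1) → ℝ}

lemma inArc_mem_farFrom_of_cuts (ht : StrictMono t) (hlast : t (Fin.last k) ≤ t 0 + 2 * π)
    {s : Set Chord}
    (hs : ∀ C ∈ s, ∃ j j' : Fin k, C.1 = s(cis (t j.castSucc), cis (t j'.castSucc)))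
    {i : Fin k} {E : Chord} (hE : InArc (t i.castSucc) (t i.succ) E) :
    E ∈ CircleGraph.farFrom s := by
  intro C hC
  obtain ⟨j, j', hCj⟩ := hs C hC
  have hcut (j : Fin k) : t j.castSucc ∈ Ico (t 0) (t 0 + 2 * π) :=
    ⟨ht.monotone (Fin.zero_le _), (ht (Fin.castSucc_lt_last j)).trans_le hlast⟩
  have hoff (j : Fin k) : t j.castSucc ∉ Ioo (t i.castSucc) (t i.succ) := fun h =>
    (Fin.castSucc_lt_succ_iff.1 (ht.lt_iff_lt.1 h.2)).not_gt
      (Fin.castSucc_lt_castSucc_iff.1 (ht.lt_iff_lt.1 h.1))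
  obtain ⟨hne, hadj⟩ := ne_and_not_adj_of_inArc (ht.monotone (Fin.zero_le _))
    ((ht.monotone (Fin.le_last _)).trans hlast) hE hCj (hcut j) (hcut j') (hoff j) (hoff j')
  exact ⟨hne, fun h => hadj h.symm⟩

lemma exists_inArc_of_cuts {E : Chord} {ξ η : ℝ} (hE : E.1 = s(cis ξ, cis η)) (hξη : ξ < η)
    (h0 : t 0 < ξ) (hlast : η < t (Fin.last k)) (hcut : ∀ j, t j ∉ Icc ξ η) :
    ∃ i : Fin k, InArc (t i.castSucc) (t i.succ) E := by
  classical
  set J := Finset.univ.filter fun j => t j < ξ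
  have hJ : J.Nonempty := ⟨0, by simp [J, h0]⟩
  have hj : t (J.max' hJ) < ξ := (Finset.mem_filter.1 (J.max'_mem hJ)).2
  have hjl : J.max' hJ ≠ Fin.last k := fun h => by rw [h] at hj; linarith
  set i := (J.max' hJ).castPred hjl
  have hi : ξ ≤ t i.succ := not_lt.1 fun h =>
    (Fin.castSucc_lt_succ (i := i)).not_ge (J.le_max' _ (by simp [J, h]))
  have := hcut i.succ
  rw [mem_Icc, not_and_or, not_le, not_le] at this
  exact ⟨i, ξ, η, by simpa [i] using hj, hξη, this.resolve_left hi.not_gt, hE⟩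

lemma nonempty_farComponents_equiv_of_arcs (ht : StrictMono t)
    (hlast : t (Fin.last k) ≤ t 0 + 2 * π) {s : Set Chord}
    (hs : ∀ E, E ∈ CircleGraph.farFrom s ↔ ∃ i : Fin k, InArc (t i.castSucc) (t i.succ) E) :
    Nonempty (FarComponents s ≃ Fin k) := by
  have hl (i : Fin (k + 1)) : t 0 ≤ t i := ht.monotone (Fin.zero_le _)
  have hr (i : Fin (k + 1)) : t i ≤ t 0 + 2 * π := (ht.monotone (Fin.le_last _)).trans hlast
  refine SimpleGraph.nonempty_connectedComponent_equiv_fin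
    (fun i E => InArc (t i.castSucc) (t i.succ) E.1) (fun i => ?_) (fun E => (hs E.1).1 E.2)
    (fun i E F hE hF => reachable_of_inArc (by linarith [hl i.castSucc, hr i.succ])
      (fun E hE => (hs E).2 ⟨i, hE⟩) hE hF) ?_
  · obtain ⟨E, hE⟩ := exists_inArc (ht (Fin.castSucc_lt_succ (i := i)))
      (by linarith [hl i.castSucc, hr i.succ])
    exact ⟨⟨E, (hs E).2 ⟨i, hE⟩⟩, hE⟩
  · intro i j E F hE hF hEF
    by_contra hij
    wlog h : i < j generalizing i j E F
    · exact this j i F E hF hE (hEF.imp Eq.symm SimpleGraph.Adj.symm) (Ne.symm hij)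
        (lt_of_le_of_ne (not_lt.1 h) (Ne.symm hij))
    obtain ⟨hne, hadj⟩ := ne_and_not_adj_of_inArc_of_le (hl _)
      (ht.monotone (Fin.succ_le_castSucc_iff.2 h)) (hr _) hE hF
    rcases hEF with rfl | hEF
    exacts [hne rfl, hadj hEF]

end Arcs

lemma notMem_of_mem_farFrom {s : Set Chord} {C E : Chord} (hE : E ∈ CircleGraph.farFrom s)
    (hC : C ∈ s) {z : ℂ} (hz : z ∈ C.1) : z ∉ E.1 :=
  fun hzE => (hE C hC).2 (adj_of_mem_of_mem (hE C hC).1 hzE hz)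

lemma ne_of_mem_farFrom {s : Set Chord} {C E : Chord} (hE : E ∈ CircleGraph.farFrom s)
    (hC : C ∈ s) {w ξ η : ℝ} (hw : cis w ∈ C.1) (hEv : E.1 = s(cis ξ, cis η)) :
    ξ ≠ w ∧ η ≠ w := by
  have := notMem_of_mem_farFrom hE hC hw
  constructor <;> rintro rfl <;> simp [hEv] at this

lemma mul_nonneg_of_mem_farFrom {s : Set Chord} {C E : Chord} {α u v ξ η : ℝ}
    (hE : E ∈ CircleGraph.farFrom s) (hC : C ∈ s) (hCv : C.1 = s(cis u, cis v))
    (hEv : E.1 = s(cis ξ, cis η)) (hu : u ∈ Ico α (α + 2 * π)) (hv : v ∈ Ico α (α + 2 * π))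
    (hξ : ξ ∈ Ico α (α + 2 * π)) (hη : η ∈ Ico α (α + 2 * π)) :
    0 ≤ (ξ - u) * (η - u) * ((ξ - v) * (η - v)) := by
  obtain ⟨hξu, hηu⟩ := ne_of_mem_farFrom hE hC (hCv ▸ Sym2.mem_mk_left _ _) hEv
  obtain ⟨hξv, hηv⟩ := ne_of_mem_farFrom hE hC (hCv ▸ Sym2.mem_mk_right _ _) hEv
  rw [← not_lt, ← adj_iff_of_angles hCv hEv hu hv hξ hη hξu hξv hηu hηv]
  exact fun h => (hE C hC).2 h.symm

lemma notMem_Icc_of_mem_farFrom {s : Set Chord} {C E : Chord} {α β ξ η : ℝ}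
    (hE : E ∈ CircleGraph.farFrom s) (hC : C ∈ s) (hCv : C.1 = s(cis α, cis β))
    (hβ : β ∈ Ioo α (α + 2 * π)) (hEv : E.1 = s(cis ξ, cis η)) (hαξ : α < ξ) (hξη : ξ < η)
    (hη : η < α + 2 * π) : β ∉ Icc ξ η := by
  obtain ⟨hξβ, hηβ⟩ := ne_of_mem_farFrom hE hC (hCv ▸ Sym2.mem_mk_right _ _) hEv
  have h := mul_nonneg_of_mem_farFrom hE hC hCv hEv ⟨le_rfl, by linarith⟩
    (Ioo_subset_Ico_self hβ) ⟨hαξ.le, by linarith⟩ ⟨by linarith, hη⟩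
  rintro ⟨h₁, h₂⟩
  exact h.not_gt (mul_neg_of_pos_of_neg (mul_pos (by linarith) (by linarith))
    (mul_neg_of_neg_of_pos (by linarith [lt_of_le_of_ne h₁ hξβ]) (by
      linarith [lt_of_le_of_ne h₂ (Ne.symm hηβ)])))

lemma mem_Icc_of_mul_nonneg {u v ξ η : ℝ} (hu : u ∈ Ioo ξ η)
    (h : 0 ≤ (ξ - u) * (η - u) * ((ξ - v) * (η - v))) : v ∈ Icc ξ η := by
  have hv : (ξ - v) * (η - v) ≤ 0 := nonpos_of_mul_nonneg_right h
    (mul_neg_of_neg_of_pos (by linarith [hu.1]) (by linarith [hu.2]))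
  by_contra hv'
  rw [mem_Icc, not_and_or, not_le, not_le] at hv'
  rcases hv' with hv' | hv'
  · exact hv.not_gt (mul_pos (by linarith) (by linarith [hu.1, hu.2]))
  · exact hv.not_gt (mul_pos_of_neg_of_neg (by linarith [hu.1, hu.2]) (by linarith))

lemma mem_farFrom_touch_iff {α β₁ β₂ : ℝ} {C D E : Chord} (hC : C.1 = s(cis α, cis β₁))
    (hD : D.1 = s(cis α, cis β₂)) (hαβ₁ : α < β₁) (hβ₁₂ : β₁ < β₂) (hβ₂ : β₂ < α + 2 * π) :
    E ∈ CircleGraph.farFrom {C, D} ↔ ∃ i : Fin 3,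
      InArc (![α, β₁, β₂, α + 2 * π] i.castSucc) (![α, β₁, β₂, α + 2 * π] i.succ) E := by
  have ht : StrictMono ![α, β₁, β₂, α + 2 * π] :=
    Fin.strictMono_iff_lt_succ.2 fun i => by fin_cases i <;> simp [hαβ₁, hβ₁₂, hβ₂]
  refine ⟨fun hE => ?_, fun ⟨i, hi⟩ => inArc_mem_farFrom_of_cuts ht (by simp) ?_ hi⟩
  · have hCs : C ∈ ({C, D} : Set Chord) := mem_insert C _
    have hDs : D ∈ ({C, D} : Set Chord) := mem_insert_of_mem C rfl
    obtain ⟨ξ, η, hαξ, hξη, hη, hE'⟩ :=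
      Chord.exists_angles_of_notMem (notMem_of_mem_farFrom hE hCs (hC ▸ Sym2.mem_mk_left _ _))
    have hβ₁ : β₁ ∈ Ioo α (α + 2 * π) := ⟨hαβ₁, by linarith⟩
    have hβ₂ : β₂ ∈ Ioo α (α + 2 * π) := ⟨by linarith, hβ₂⟩
    refine exists_inArc_of_cuts hE' hξη (by simpa) (by simpa) fun j => ?_
    fin_cases j
    · exact fun h => by simp at h; linarith [h.1]
    · exact notMem_Icc_of_mem_farFrom hE hCs hC hβ₁ hE' hαξ hξη hη
    · exact notMem_Icc_of_mem_farFrom hE hDs hD hβ₂ hE' hαξ hξη hη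
    · exact fun h => by simp at h; linarith [h.2]
  · rintro X (rfl | rfl)
    exacts [⟨0, 1, hC⟩, ⟨0, 2, hD⟩]

lemma mem_farFrom_crossing_iff {α β γ₁ γ₂ : ℝ} {C D E : Chord} (hC : C.1 = s(cis α, cis β))
    (hD : D.1 = s(cis γ₁, cis γ₂)) (hαγ₁ : α < γ₁) (hγ₁β : γ₁ < β) (hβγ₂ : β < γ₂)
    (hγ₂ : γ₂ < α + 2 * π) :
    E ∈ CircleGraph.farFrom {C, D} ↔ ∃ i : Fin 4,
      InArc (![α, γ₁, β, γ₂, α + 2 * π] i.castSucc) (![α, γ₁, β, γ₂, α + 2 * π] i.succ) E := by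
  have ht : StrictMono ![α, γ₁, β, γ₂, α + 2 * π] :=
    Fin.strictMono_iff_lt_succ.2 fun i => by fin_cases i <;> simp [hαγ₁, hγ₁β, hβγ₂, hγ₂]
  refine ⟨fun hE => ?_, fun ⟨i, hi⟩ => inArc_mem_farFrom_of_cuts ht (by simp) ?_ hi⟩
  · have hCs : C ∈ ({C, D} : Set Chord) := mem_insert C _
    have hDs : D ∈ ({C, D} : Set Chord) := mem_insert_of_mem C rfl
    obtain ⟨ξ, η, hαξ, hξη, hη, hE'⟩ :=
      Chord.exists_angles_of_notMem (notMem_of_mem_farFrom hE hCs (hC ▸ Sym2.mem_mk_left _ _))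
    have hβE := notMem_Icc_of_mem_farFrom hE hCs hC ⟨by linarith, by linarith⟩ hE' hαξ hξη hη
    have hprod := mul_nonneg_of_mem_farFrom (α := α) hE hDs hD hE' ⟨hαγ₁.le, by linarith⟩
      ⟨by linarith, hγ₂⟩ ⟨hαξ.le, by linarith⟩ ⟨by linarith, hη⟩
    -- an endpoint of `D` strictly between `ξ` and `η` would force `β` in between as well
    have hγ {u v : ℝ} (hu : cis u ∈ D.1) (h : 0 ≤ (ξ - u) * (η - u) * ((ξ - v) * (η - v)))
        (hβuv : β ∈ uIcc u v) : u ∉ Icc ξ η := fun hu' => by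
      obtain ⟨hξu, hηu⟩ := ne_of_mem_farFrom hE hDs hu hE'
      exact hβE (uIcc_subset_Icc hu' (mem_Icc_of_mul_nonneg
        ⟨lt_of_le_of_ne hu'.1 hξu, lt_of_le_of_ne hu'.2 (Ne.symm hηu)⟩ h) hβuv)
    refine exists_inArc_of_cuts hE' hξη (by simpa) (by simpa) fun j => ?_
    fin_cases j
    · exact fun h => by simp at h; linarith [h.1]
    · exact hγ (hD ▸ Sym2.mem_mk_left _ _) hprod (Icc_subset_uIcc ⟨hγ₁β.le, hβγ₂.le⟩)
    · exact hβE
    · exact hγ (hD ▸ Sym2.mem_mk_right _ _) (by rwa [mul_comm])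
        (Icc_subset_uIcc' ⟨hγ₁β.le, hβγ₂.le⟩)
    · exact fun h => by simp at h; linarith [h.2]
  · rintro X (rfl | rfl)
    exacts [⟨0, 2, hC⟩, ⟨1, 3, hD⟩]

lemma nonempty_farComponents_equiv_fin_three {C D : Chord} (hCD : C ≠ D) {z : ℂ}
    (hzC : z ∈ C.1) (hzD : z ∈ D.1) : Nonempty (FarComponents {C, D} ≃ Fin 3) := by
  obtain ⟨a, ha, hza, hC⟩ := Chord.exists_val_eq_of_mem hzC
  obtain ⟨b, hb, hzb, hD⟩ := Chord.exists_val_eq_of_mem hzD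
  obtain ⟨α, -, rfl⟩ := exists_cis_eq (C.mem_S1 hzC) 0
  obtain ⟨β₁, hβ₁, rfl⟩ := exists_cis_eq_of_ne ha hza.symm
  obtain ⟨β₂, hβ₂, rfl⟩ := exists_cis_eq_of_ne hb hzb.symm
  wlog h : β₁ < β₂ generalizing C D β₁ β₂
  · rw [Set.pair_comm]
    refine this hCD.symm hzD hzC _ hβ₂ hb hzb hD _ hβ₁ ha hza hC
      (lt_of_le_of_ne (not_lt.1 h) fun h' => hCD (Chord.ext ?_))
    rw [hC, hD, h']
  exact nonempty_farComponents_equiv_of_arcs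
    (Fin.strictMono_iff_lt_succ.2 fun i => by fin_cases i <;> simp [hβ₁.1, h, hβ₂.2]) (by simp)
    fun E => mem_farFrom_touch_iff hC hD hβ₁.1 h hβ₂.2

lemma nonempty_farComponents_equiv_fin_four {C D : Chord} (hadj : CircleGraph.Adj C D)
    (hCD : ∀ z ∈ C.1, z ∉ D.1) : Nonempty (FarComponents {C, D} ≃ Fin 4) := by
  obtain ⟨⟨a, ha⟩, ⟨b, hb⟩, hC⟩ := C.exists_val_eq
  obtain ⟨α, -, rfl⟩ := exists_cis_eq ha 0
  obtain ⟨β, hβ, rfl⟩ := exists_cis_eq_of_ne hb (Chord.ne_of_val_eq hC).symm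
  obtain ⟨γ₁, γ₂, hαγ₁, hγ₁₂, hγ₂, hD⟩ :=
    Chord.exists_angles_of_notMem (hCD _ (hC ▸ Sym2.mem_mk_left _ _))
  have hβD : cis β ∉ D.1 := hCD _ (hC ▸ Sym2.mem_mk_right _ _)
  have hβγ₁ : γ₁ ≠ β := by rintro rfl; simp [hD] at hβD
  have hβγ₂ : γ₂ ≠ β := by rintro rfl; simp [hD] at hβD
  rw [adj_iff_of_angles (α := α) hC hD ⟨le_rfl, by linarith⟩ (Ioo_subset_Ico_self hβ)
    ⟨hαγ₁.le, by linarith⟩ ⟨by linarith, hγ₂⟩ hαγ₁.ne' hβγ₁ (by linarith) hβγ₂] at hadj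
  have hγβ : γ₁ < β ∧ β < γ₂ := by
    rcases mul_neg_iff.1 (neg_of_mul_neg_right hadj (mul_pos (by linarith) (by linarith)).le)
      with h | h <;> constructor <;> linarith
  exact nonempty_farComponents_equiv_of_arcs
    (Fin.strictMono_iff_lt_succ.2 fun i => by fin_cases i <;> simp [hαγ₁, hγβ, hγ₂]) (by simp)
    fun E => mem_farFrom_crossing_iff hC hD hαγ₁ hγβ.1 hγβ.2 hγ₂

end CircleGraph

namespace CircleGraph

def Touch (C D : Chord) : Prop := C ≠ D ∧ ∃ z, z ∈ C.1 ∧ z ∈ D.1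

lemma Touch.map (φ : CircleGraph ≃g CircleGraph) {C D : Chord} (h : Touch C D) :
    Touch (φ C) (φ D) := by
  obtain ⟨hCD, z, hzC, hzD⟩ := h
  refine ⟨φ.injective.ne hCD, ?_⟩
  by_contra! hno
  obtain ⟨e₃⟩ := nonempty_farComponents_equiv_fin_three hCD hzC hzD
  obtain ⟨e₄⟩ := nonempty_farComponents_equiv_fin_four
    (φ.map_adj_iff.2 (adj_of_mem_of_mem hCD hzC hzD)) hno
  have e := φ.farFromComponentEquiv {C, D}
  rw [image_pair] at e
  simpa using Fintype.card_congr (e₃.symm.trans (e.trans e₄))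

/-- Otherwise the three chords would be the sides of a triangle, and a chord touching all three
sides would contain two vertices, i.e. be a side. -/
lemma exists_mem_of_touch {C₁ C₂ C₃ D : Chord} (h₁₂ : Touch C₁ C₂) (h₁₃ : Touch C₁ C₃)
    (h₂₃ : Touch C₂ C₃) (hD₁ : Touch D C₁) (hD₂ : Touch D C₂) (hD₃ : Touch D C₃) :
    ∃ z, z ∈ C₁.1 ∧ z ∈ C₂.1 ∧ z ∈ C₃.1 := by
  obtain ⟨-, x, hx₁, hx₂⟩ := h₁₂
  obtain ⟨-, y, hy₁, hy₃⟩ := h₁₃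
  obtain ⟨-, w, hw₂, hw₃⟩ := h₂₃
  by_contra! hno
  have hxy : x ≠ y := by rintro rfl; exact hno x hx₁ hx₂ hy₃
  have hxw : x ≠ w := by rintro rfl; exact hno x hx₁ hx₂ hw₃
  have hyw : y ≠ w := by rintro rfl; exact hno y hy₁ hw₂ hy₃
  have hC₁ := (Sym2.mem_and_mem_iff hxy).1 ⟨hx₁, hy₁⟩
  have hC₂ := (Sym2.mem_and_mem_iff hxw).1 ⟨hx₂, hw₂⟩
  have hC₃ := (Sym2.mem_and_mem_iff hyw).1 ⟨hy₃, hw₃⟩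
  obtain ⟨⟨d₁, _⟩, ⟨d₂, _⟩, hD⟩ := D.exists_val_eq
  obtain ⟨hD₁, p, hp, hp₁⟩ := hD₁
  obtain ⟨hD₂, q, hq, hq₂⟩ := hD₂
  obtain ⟨hD₃, r, hr, hr₃⟩ := hD₃
  have hne {C : Chord} (h : D ≠ C) : D.1 ≠ C.1 := fun h' => h (Chord.ext h')
  have h₁ := hne hD₁
  have h₂ := hne hD₂
  have h₃ := hne hD₃
  simp only [hD, hC₁, hC₂, hC₃, Ne, Sym2.eq_iff, Sym2.mem_iff] at h₁ h₂ h₃ hp hq hr hp₁ hq₂ hr₃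
  grind

lemma exists_touch_of_mem {C₁ C₂ C₃ : Chord} {z : ℂ} (h₁ : z ∈ C₁.1) (h₂ : z ∈ C₂.1)
    (h₃ : z ∈ C₃.1) : ∃ D, Touch D C₁ ∧ Touch D C₂ ∧ Touch D C₃ := by
  obtain ⟨a₁, -, -, hC₁⟩ := Chord.exists_val_eq_of_mem h₁
  obtain ⟨a₂, -, -, hC₂⟩ := Chord.exists_val_eq_of_mem h₂
  obtain ⟨a₃, -, -, hC₃⟩ := Chord.exists_val_eq_of_mem h₃
  obtain ⟨q, hq, hqa⟩ := (infinite_S1.sdiff (toFinite {z, a₁, a₂, a₃})).nonempty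
  simp only [mem_insert_iff, mem_singleton_iff, not_or] at hqa
  obtain ⟨hqz, hqa⟩ := hqa
  let D := Chord.of z q (C₁.mem_S1 h₁) hq (Ne.symm hqz)
  have hD {C : Chord} {a : ℂ} (hC : C.1 = s(z, a)) (hqa : q ≠ a) (hz : z ∈ C.1) : Touch D C :=
    ⟨fun h => by simpa [D, hC, Sym2.eq_iff, hqa, hqz] using congrArg Subtype.val h, z,
      Sym2.mem_mk_left _ _, hz⟩
  exact ⟨D, hD hC₁ hqa.1 h₁, hD hC₂ hqa.2.1 h₂, hD hC₃ hqa.2.2 h₃⟩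

lemma exists_touch_at {p : ℂ} (hp : p ∈ S1) : ∃ C D : Chord, p ∈ C.1 ∧ p ∈ D.1 ∧ Touch C D := by
  obtain ⟨q, hq, hqp⟩ := (infinite_S1.sdiff (toFinite {p})).nonempty
  obtain ⟨r, hr, hrpq⟩ := (infinite_S1.sdiff (toFinite {p, q})).nonempty
  simp only [mem_insert_iff, mem_singleton_iff, not_or] at hqp hrpq
  refine ⟨Chord.of p q hp hq (Ne.symm hqp), Chord.of p r hp hr (Ne.symm hrpq.1),
    Sym2.mem_mk_left _ _, Sym2.mem_mk_left _ _, fun h => ?_, p, Sym2.mem_mk_left _ _,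
    Sym2.mem_mk_left _ _⟩
  simpa [Sym2.eq_iff, hqp, Ne.symm hrpq.2] using congrArg Subtype.val h

/-- Two touching chords through `p` are mapped to chords with a common endpoint `z`; any third
chord through `p` forms with them a pencil touched by a fourth chord, and these touchings are
preserved, so its image passes through `z` by `exists_mem_of_touch`. -/
lemma exists_mem_map_of_mem (φ : CircleGraph ≃g CircleGraph) {p : ℂ} (hp : p ∈ S1) :
    ∃ z ∈ S1, ∀ C : Chord, p ∈ C.1 → z ∈ (φ C).1 := by
  obtain ⟨C₀, D₀, hC₀, hD₀, hCD₀⟩ := exists_touch_at hp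
  obtain ⟨hne, z, hzC, hzD⟩ := hCD₀.map φ
  refine ⟨z, (φ C₀).mem_S1 hzC, fun C hC => ?_⟩
  by_cases h₁ : C = C₀
  · exact h₁ ▸ hzC
  by_cases h₂ : C = D₀
  · exact h₂ ▸ hzD
  obtain ⟨D, hD₁, hD₂, hD₃⟩ := exists_touch_of_mem hC₀ hD₀ hC
  have hC₀C : Touch C₀ C := ⟨Ne.symm h₁, p, hC₀, hC⟩
  have hD₀C : Touch D₀ C := ⟨Ne.symm h₂, p, hD₀, hC⟩
  obtain ⟨w, hw₁, hw₂, hw₃⟩ := exists_mem_of_touch (hCD₀.map φ) (hC₀C.map φ) (hD₀C.map φ)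
    (hD₁.map φ) (hD₂.map φ) (hD₃.map φ)
  rwa [Chord.eq_of_mem_of_mem hne hzC hzD hw₁ hw₂]

def pointMap (φ : CircleGraph ≃g CircleGraph) (p : S1) : S1 :=
  ⟨(exists_mem_map_of_mem φ p.2).choose, (exists_mem_map_of_mem φ p.2).choose_spec.1⟩

lemma pointMap_mem (φ : CircleGraph ≃g CircleGraph) {p : S1} {C : Chord} (hp : (p : ℂ) ∈ C.1) :
    (pointMap φ p : ℂ) ∈ (φ C).1 :=
  (exists_mem_map_of_mem φ p.2).choose_spec.2 C hp

lemma pointMap_symm_pointMap (φ : CircleGraph ≃g CircleGraph) (p : S1) :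
    pointMap φ.symm (pointMap φ p) = p := by
  obtain ⟨C, D, hC, hD, hCD, -⟩ := exists_touch_at p.2
  have hC' := pointMap_mem φ.symm (pointMap_mem φ hC)
  have hD' := pointMap_mem φ.symm (pointMap_mem φ hD)
  rw [φ.symm_apply_apply] at hC' hD'
  exact Subtype.ext (Chord.eq_of_mem_of_mem hCD hC' hD' hC hD)

def pointEquiv (φ : CircleGraph ≃g CircleGraph) : S1 ≃ S1 where
  toFun := pointMap φ
  invFun := pointMap φ.symm
  left_inv := pointMap_symm_pointMap φ
  right_inv := pointMap_symm_pointMap φ.symm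

lemma val_apply_eq_pointMap (φ : CircleGraph ≃g CircleGraph) {C : Chord} {a b : S1}
    (hC : C.1 = s((a : ℂ), (b : ℂ))) : (φ C).1 = s((pointMap φ a : ℂ), (pointMap φ b : ℂ)) := by
  have hab : (a : ℂ) ≠ b := Chord.ne_of_val_eq hC
  refine (Sym2.mem_and_mem_iff fun h => hab ?_).1 ⟨pointMap_mem φ (hC ▸ Sym2.mem_mk_left _ _),
    pointMap_mem φ (hC ▸ Sym2.mem_mk_right _ _)⟩
  rw [← pointMap_symm_pointMap φ a, Subtype.ext h, pointMap_symm_pointMap]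

def PreservesSeparation (G : S1 → S1) : Prop :=
  ∀ a b c d : S1, Separates a b c d → Separates (G a) (G b) (G c) (G d)

lemma preservesSeparation_pointMap (φ : CircleGraph ≃g CircleGraph) :
    PreservesSeparation (pointMap φ) := by
  intro a b c d h
  obtain ⟨hab, hca, hcb, hda, hdb, hcd⟩ := h.distinct
  have hinj {x y : S1} (hxy : (x : ℂ) ≠ y) : (pointMap φ x : ℂ) ≠ pointMap φ y := fun h =>
    hxy (congrArg Subtype.val ((pointEquiv φ).injective (Subtype.ext h)))
  rw [← adj_iff_separates (val_apply_eq_pointMap φ (C := Chord.of a b a.2 b.2 hab) rfl)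
    (val_apply_eq_pointMap φ (C := Chord.of c d c.2 d.2 hcd) rfl) (hinj hca) (hinj hcb)
    (hinj hda) (hinj hdb)]
  exact φ.map_adj_iff.2 ((adj_iff_separates rfl rfl hca hcb hda hdb).2 h)

/-- The open arc with endpoints `u` and `v` that contains `q`. -/
def openArc (u v q : S1) : Set S1 := {x | x ≠ u ∧ x ≠ v ∧ ¬ Separates u v q x}

lemma openArc_comm (u v q : S1) : openArc u v q = openArc v u q := by
  ext x; simp only [openArc, mem_ofPred_eq, separates_swap]; tauto

lemma mem_openArc_self {u v q : S1} (hqu : q ≠ u) (hqv : q ≠ v) : q ∈ openArc u v q :=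
  ⟨hqu, hqv, fun h => (mul_self_nonneg _).not_gt h⟩

lemma PreservesSeparation.preimage_openArc {G : S1 ≃ S1} (hG : PreservesSeparation G)
    (hG' : PreservesSeparation G.symm) (u v q : S1) :
    G ⁻¹' openArc u v q = openArc (G.symm u) (G.symm v) (G.symm q) := by
  ext x
  refine and_congr G.eq_symm_apply.symm.not (and_congr G.eq_symm_apply.symm.not
    (not_congr ⟨fun h => ?_, fun h => ?_⟩))
  · simpa using hG' _ _ _ _ h
  · simpa using hG _ _ _ _ h

lemma isOpen_openArc {u v q : S1} (huv : u ≠ v) (hqu : q ≠ u) (hqv : q ≠ v) :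
    IsOpen (openArc u v q) := by
  have hA {x : S1} : signedArea u v x = 0 ↔ x = u ∨ x = v := by
    rw [signedArea_eq_zero_iff u.2 v.2 x.2 (Subtype.coe_injective.ne huv), Subtype.ext_iff,
      Subtype.ext_iff]
  have hq : signedArea u v q ≠ 0 := by rw [Ne, hA]; tauto
  have : openArc u v q = {x : S1 | 0 < signedArea u v q * signedArea u v x} := by
    ext x
    have hx : signedArea u v x ≠ 0 ↔ x ≠ u ∧ x ≠ v := by rw [Ne, hA]; tauto
    simp only [openArc, mem_ofPred_eq, Separates, not_lt, ← and_assoc, ← hx]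
    exact ⟨fun h => h.2.lt_of_ne (mul_ne_zero hq h.1).symm,
      fun h => ⟨right_ne_zero_of_mul h.ne', h.le⟩⟩
  rw [this]
  exact isOpen_lt continuous_const
    (continuous_const.mul ((continuous_signedArea _ _).comp continuous_subtype_val))

def cisS1 (θ : ℝ) : S1 := ⟨cis θ, cis_mem θ⟩

@[simp] lemma coe_cisS1 (θ : ℝ) : (cisS1 θ : ℂ) = cis θ := rfl

lemma continuous_cisS1 : Continuous cisS1 :=
  (continuous_subtype_val.comp Circle.exp.continuous).subtype_mk _

lemma cisS1_add_two_pi (θ : ℝ) : cisS1 (θ + 2 * π) = cisS1 θ := Subtype.ext (cis_add_two_pi θ)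

lemma cisS1_ne_cisS1 {α a b : ℝ} (ha : a ∈ Ico α (α + 2 * π)) (hb : b ∈ Ico α (α + 2 * π))
    (hab : a ≠ b) : cisS1 a ≠ cisS1 b :=
  fun h => cis_ne_cis ha hb hab (by simpa using congrArg Subtype.val h)

lemma exists_cisS1_eq (x : S1) (α : ℝ) : ∃ θ ∈ Ico α (α + 2 * π), cisS1 θ = x := by
  obtain ⟨θ, hθ, h⟩ := exists_cis_eq x.2 α
  exact ⟨θ, hθ, Subtype.ext h⟩

lemma openArc_cisS1 {α β γ : ℝ} (hαγ : α < γ) (hγβ : γ < β) (hβ : β < α + 2 * π) :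
    openArc (cisS1 α) (cisS1 β) (cisS1 γ) = cisS1 '' Ioo α β := by
  ext x
  obtain ⟨ζ, hζ, rfl⟩ := exists_cisS1_eq x α
  have hW {θ : ℝ} (h₁ : α ≤ θ) (h₂ : θ < α + 2 * π) : θ ∈ Ico α (α + 2 * π) := ⟨h₁, h₂⟩
  have hinj {θ : ℝ} (hθ : θ ∈ Ico α (α + 2 * π)) : cisS1 ζ = cisS1 θ ↔ ζ = θ :=
    ⟨fun h => cis_injOn α hζ hθ (by simpa using congrArg Subtype.val h), by rintro rfl; rfl⟩
  have hRHS : cisS1 ζ ∈ cisS1 '' Ioo α β ↔ ζ ∈ Ioo α β :=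
    ⟨fun ⟨θ, hθ, h⟩ => (hinj (hW hθ.1.le (by linarith [hθ.2]))).1 h.symm ▸ hθ,
      fun h => ⟨ζ, h, rfl⟩⟩
  rw [hRHS, openArc, mem_ofPred_eq, Ne, Ne, (hinj (hW le_rfl (by linarith))).not,
    (hinj (hW (by linarith) hβ)).not, coe_cisS1, coe_cisS1, coe_cisS1, coe_cisS1,
    separates_cis_iff (hW le_rfl (by linarith)) (hW (by linarith) hβ)
      (hW hαγ.le (by linarith)) hζ (by linarith)]
  constructor
  · rintro ⟨hζα, hζβ, hsep⟩
    refine ⟨lt_of_le_of_ne hζ.1 (Ne.symm hζα), lt_of_not_ge fun h => hsep ?_⟩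
    have h' := lt_of_le_of_ne h (Ne.symm hζβ)
    exact mul_neg_of_pos_of_neg (mul_pos (by linarith) (by linarith))
      (mul_neg_of_neg_of_pos (by linarith) (by linarith))
  · rintro ⟨h₁, h₂⟩
    exact ⟨h₁.ne', h₂.ne, not_lt.2 (mul_nonneg (mul_pos (by linarith) (by linarith)).le
      (mul_pos_of_neg_of_neg (by linarith) (by linarith)).le)⟩

lemma isPreconnected_openArc {u v q : S1} (huv : u ≠ v) (hqu : q ≠ u) (hqv : q ≠ v) :
    IsPreconnected (openArc u v q) := by
  obtain ⟨α, -, rfl⟩ := exists_cisS1_eq u 0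
  obtain ⟨β, hβ, rfl⟩ := exists_cisS1_eq v α
  obtain ⟨γ, hγ, rfl⟩ := exists_cisS1_eq q α
  have hαβ : α < β := lt_of_le_of_ne hβ.1 (by rintro rfl; exact huv rfl)
  have hαγ : α < γ := lt_of_le_of_ne hγ.1 (by rintro rfl; exact hqu rfl)
  rcases lt_or_gt_of_ne (show γ ≠ β by rintro rfl; exact hqv rfl) with h | h
  · rw [openArc_cisS1 hαγ h hβ.2]
    exact isPreconnected_Ioo.image _ continuous_cisS1.continuousOn
  · rw [openArc_comm, ← cisS1_add_two_pi α, openArc_cisS1 h hγ.2 (by linarith)]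
    exact isPreconnected_Ioo.image _ continuous_cisS1.continuousOn

lemma exists_openArc_subset (q : S1) {U : Set S1} (hU : U ∈ 𝓝 q) :
    ∃ u v, u ≠ v ∧ q ≠ u ∧ q ≠ v ∧ openArc u v q ⊆ U := by
  obtain ⟨θ, -, rfl⟩ := exists_cisS1_eq q 0
  obtain ⟨l, r, ⟨hl, hr⟩, hlr⟩ :=
    mem_nhds_iff_exists_Ioo_subset.1 (continuous_cisS1.continuousAt.preimage_mem_nhds hU)
  set δ := min (min (θ - l) (r - θ)) π
  have hδ : 0 < δ := lt_min (lt_min (by linarith) (by linarith)) pi_pos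
  have hδl : δ ≤ θ - l := (min_le_left _ _).trans (min_le_left _ _)
  have hδr : δ ≤ r - θ := (min_le_left _ _).trans (min_le_right _ _)
  have hδπ : δ ≤ π := min_le_right _ _
  have hW {x : ℝ} (h₁ : θ - δ / 2 ≤ x) (h₂ : x ≤ θ + δ / 2) :
      x ∈ Ico (θ - δ / 2) (θ - δ / 2 + 2 * π) := ⟨h₁, by linarith⟩
  refine ⟨cisS1 (θ - δ / 2), cisS1 (θ + δ / 2),
    cisS1_ne_cisS1 (hW le_rfl (by linarith)) (hW (by linarith) le_rfl) (by linarith),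
    cisS1_ne_cisS1 (hW (by linarith) (by linarith)) (hW le_rfl (by linarith)) (by linarith),
    cisS1_ne_cisS1 (hW (by linarith) (by linarith)) (hW (by linarith) le_rfl) (by linarith), ?_⟩
  rw [openArc_cisS1 (by linarith) (by linarith) (by linarith)]
  exact image_subset_iff.2 fun x hx => hlr ⟨by linarith [hx.1], by linarith [hx.2]⟩

lemma PreservesSeparation.continuous {G : S1 ≃ S1} (hG : PreservesSeparation G)
    (hG' : PreservesSeparation G.symm) : Continuous G := by
  refine continuous_iff_continuousAt.2 fun p U hU => Filter.mem_map.2 ?_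
  obtain ⟨u, v, huv, hu, hv, hsub⟩ := exists_openArc_subset (G p) hU
  have h := hG.preimage_openArc hG' u v (G p)
  rw [G.symm_apply_apply] at h
  have hne {w : S1} (hw : G p ≠ w) : p ≠ G.symm w := fun h => hw (by rw [h, G.apply_symm_apply])
  exact Filter.mem_of_superset ((isOpen_openArc (G.symm.injective.ne huv) (hne hu)
    (hne hv)).mem_nhds (mem_openArc_self (hne hu) (hne hv))) (h ▸ preimage_mono hsub)

/-- Otherwise `c` and `d` would be joined by the preimage of an arc avoiding `g a` and `g b`, a
connected set on which `signedArea a b` changes sign without vanishing. -/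
lemma preservesSeparation_homeomorph (g : S1 ≃ₜ S1) : PreservesSeparation g := by
  intro a b c d h
  obtain ⟨hab, hca, hcb, hda, hdb, -⟩ := h.distinct
  have hne {x y : S1} (hxy : (x : ℂ) ≠ y) : g x ≠ g y := g.injective.ne fun h => hxy (by rw [h])
  by_contra hns
  have hA := (isPreconnected_openArc (hne hab) (hne hca) (hne hcb)).image g.symm
    g.symm.continuous.continuousOn
  have hc : c ∈ g.symm '' openArc (g a) (g b) (g c) :=
    ⟨g c, mem_openArc_self (hne hca) (hne hcb), g.symm_apply_apply c⟩
  have hd : d ∈ g.symm '' openArc (g a) (g b) (g c) :=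
    ⟨g d, ⟨hne hda, hne hdb, hns⟩, g.symm_apply_apply d⟩
  obtain ⟨x, ⟨y, hy, rfl⟩, hx⟩ := hA.intermediate_value₂ hd hc
    (f := fun x : S1 => signedArea a b x * signedArea a b c) (g := 0)
    (((continuous_signedArea _ _).comp continuous_subtype_val).mul continuous_const).continuousOn
    continuousOn_const (by rw [mul_comm]; exact h.le) (mul_self_nonneg _)
  rcases (signedArea_eq_zero_iff a.2 b.2 (g.symm y).2 hab).1
    ((mul_eq_zero.1 hx).resolve_right (left_ne_zero_of_mul (ne_of_lt h))) with h' | h'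
  · exact hy.1 (by rw [← Subtype.ext h', g.apply_symm_apply])
  · exact hy.2.1 (by rw [← Subtype.ext h', g.apply_symm_apply])

def pointHomeomorph (φ : CircleGraph ≃g CircleGraph) : S1 ≃ₜ S1 where
  toEquiv := pointEquiv φ
  continuous_toFun :=
    (preservesSeparation_pointMap φ).continuous (preservesSeparation_pointMap φ.symm)
  continuous_invFun := PreservesSeparation.continuous (G := (pointEquiv φ).symm)
    (preservesSeparation_pointMap φ.symm) (preservesSeparation_pointMap φ)

open Classical in
/-- `g` extended by the identity off the circle, so that it acts on `Sym2 ℂ`. -/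
def extendHomeomorph (g : S1 ≃ₜ S1) (z : ℂ) : ℂ := if h : z ∈ S1 then g ⟨z, h⟩ else z

@[simp] lemma extendHomeomorph_coe (g : S1 ≃ₜ S1) (p : S1) : extendHomeomorph g p = g p := by
  simp [extendHomeomorph, p.2]

def chordMap (g : S1 ≃ₜ S1) (C : Chord) : Chord :=
  ⟨C.1.map (extendHomeomorph g), by
    obtain ⟨a, b, hC⟩ := C.exists_val_eq
    have hab : g a ≠ g b := g.injective.ne fun h => Chord.ne_of_val_eq hC (by rw [h])
    rw [hC, Sym2.map_mk, extendHomeomorph_coe, extendHomeomorph_coe]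
    exact (Chord.of _ _ (g a).2 (g b).2 (Subtype.coe_injective.ne hab)).2⟩

lemma val_chordMap (g : S1 ≃ₜ S1) {C : Chord} {a b : S1} (hC : C.1 = s((a : ℂ), (b : ℂ))) :
    (chordMap g C).1 = s((g a : ℂ), (g b : ℂ)) := by
  simp [chordMap, hC]

lemma chordMap_chordMap (g g' : S1 ≃ₜ S1) (C : Chord) :
    chordMap g' (chordMap g C) = chordMap (g.trans g') C := by
  obtain ⟨a, b, hC⟩ := C.exists_val_eq
  exact Chord.ext (by rw [val_chordMap _ (val_chordMap g hC), val_chordMap _ hC]; rfl)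

lemma chordMap_symm_chordMap (g : S1 ≃ₜ S1) (C : Chord) :
    chordMap g.symm (chordMap g C) = C := by
  obtain ⟨a, b, hC⟩ := C.exists_val_eq
  exact Chord.ext (by rw [chordMap_chordMap, val_chordMap _ hC, hC]; simp)

lemma adj_chordMap (g : S1 ≃ₜ S1) {C D : Chord} (h : CircleGraph.Adj C D) :
    CircleGraph.Adj (chordMap g C) (chordMap g D) := by
  have hne : chordMap g C ≠ chordMap g D := fun h' =>
    h.ne (by rw [← chordMap_symm_chordMap g C, h', chordMap_symm_chordMap])
  by_cases hs : ∃ z, z ∈ C.1 ∧ z ∈ D.1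
  · obtain ⟨z, hzC, hzD⟩ := hs
    exact adj_of_mem_of_mem hne (Sym2.mem_map.2 ⟨z, hzC, rfl⟩) (Sym2.mem_map.2 ⟨z, hzD, rfl⟩)
  obtain ⟨a, b, hC⟩ := C.exists_val_eq
  obtain ⟨c, d, hD⟩ := D.exists_val_eq
  have hout {x : S1} (hx : (x : ℂ) ∈ D.1) {y : S1} (hy : (y : ℂ) ∈ C.1) : (x : ℂ) ≠ y :=
    fun h => hs ⟨x, h ▸ hy, hx⟩
  have hg {x y : S1} (hxy : (x : ℂ) ≠ y) : (g x : ℂ) ≠ g y :=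
    Subtype.coe_injective.ne (g.injective.ne (Subtype.coe_injective.ne_iff.1 hxy))
  have hc : (c : ℂ) ∈ D.1 := hD ▸ Sym2.mem_mk_left _ _
  have hd : (d : ℂ) ∈ D.1 := hD ▸ Sym2.mem_mk_right _ _
  have ha : (a : ℂ) ∈ C.1 := hC ▸ Sym2.mem_mk_left _ _
  have hb : (b : ℂ) ∈ C.1 := hC ▸ Sym2.mem_mk_right _ _
  rw [adj_iff_separates hC hD (hout hc ha) (hout hc hb) (hout hd ha) (hout hd hb)] at h
  rw [adj_iff_separates (val_chordMap g hC) (val_chordMap g hD) (hg (hout hc ha))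
    (hg (hout hc hb)) (hg (hout hd ha)) (hg (hout hd hb))]
  exact preservesSeparation_homeomorph g a b c d h

def chordAut (g : S1 ≃ₜ S1) : CircleGraph ≃g CircleGraph where
  toFun := chordMap g
  invFun := chordMap g.symm
  left_inv := chordMap_symm_chordMap g
  right_inv := chordMap_symm_chordMap g.symm
  map_rel_iff' {C D} := ⟨fun h => by
    simpa only [chordMap_symm_chordMap] using adj_chordMap g.symm (C := chordMap g C)
      (D := chordMap g D) h, adj_chordMap g⟩

lemma chordAut_trans (f g : S1 ≃ₜ S1) :
    chordAut (f.trans g) = (chordAut f).trans (chordAut g) :=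
  RelIso.ext fun C => (chordMap_chordMap f g C).symm

lemma pointHomeomorph_chordAut (g : S1 ≃ₜ S1) : pointHomeomorph (chordAut g) = g := by
  ext p
  obtain ⟨C, D, hC, hD, hCD, -⟩ := exists_touch_at p.2
  have hmem {E : Chord} (hE : (p : ℂ) ∈ E.1) : (g p : ℂ) ∈ (chordAut g E).1 :=
    Sym2.mem_map.2 ⟨p, hE, extendHomeomorph_coe g p⟩
  exact Chord.eq_of_mem_of_mem ((chordAut g).injective.ne hCD) (pointMap_mem _ hC)
    (pointMap_mem _ hD) (hmem hC) (hmem hD)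

lemma chordAut_pointHomeomorph (φ : CircleGraph ≃g CircleGraph) :
    chordAut (pointHomeomorph φ) = φ := by
  refine RelIso.ext fun C => ?_
  obtain ⟨a, b, hC⟩ := C.exists_val_eq
  exact Chord.ext ((val_chordMap (pointHomeomorph φ) hC).trans (val_apply_eq_pointMap φ hC).symm)

end CircleGraph

end

/-- The map `π` sending each homeomorphism `g` of the circle to the
induced permutation of chords is a group isomorphism from `Aut(S¹)` onto `Aut(𝒞)`:
it sends the chord with endpoints `x, y` to the chord with endpoints `g x, g y`,
it turns composition of homeomorphisms into composition of graph automorphisms,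
and it is bijective. -/
theorem circleGraph_aut_eq_circle_homeo :
    ∃ π : (S1 ≃ₜ S1) → (CircleGraph ≃g CircleGraph),
      (∀ (g : S1 ≃ₜ S1) (a b : S1) (C : Chord),
        C.1 = s((a : ℂ), (b : ℂ)) → (π g C).1 = s((g a : ℂ), (g b : ℂ))) ∧
      (∀ f g : S1 ≃ₜ S1, π (f.trans g) = (π f).trans (π g)) ∧
      Function.Bijective π :=
  ⟨CircleGraph.chordAut, fun g _ _ _ hC => CircleGraph.val_chordMap g hC,
    CircleGraph.chordAut_trans, Function.bijective_iff_has_inverse.2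
      ⟨CircleGraph.pointHomeomorph, CircleGraph.pointHomeomorph_chordAut,
        CircleGraph.chordAut_pointHomeomorph⟩⟩
end
end

section
/- Every countable circle graph is isomorphic to an induced subgraph of the rational circle graph 𝒞_ℚ; that is, 𝒞_ℚ is strongly universal for the class of countable circle graphs. -/
noncomputable section

/-- The rational points of the circle: the points `exp (2 π i q)` for `q : ℚ`. -/
def Q1 : Set ℂ := {z : ℂ | ∃ q : ℚ, z = Complex.exp (2 * Real.pi * Complex.I * q)}

/-- A rational chord: an unordered pair of two distinct rational points of the circle. -/
def ChordQ : Type := {p : Sym2 ℂ // (∀ z ∈ p, z ∈ Q1) ∧ ¬ p.IsDiag}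

/-- The rational circle graph: vertices are the rational chords, two distinct chords
being adjacent whenever their segments intersect. -/
def RationalCircleGraph : SimpleGraph ChordQ where
  Adj C D := C ≠ D ∧ (chordSegment C.1 ∩ chordSegment D.1).Nonempty
  symm := ⟨fun C D ⟨h1, h2⟩ => ⟨h1.symm, by rwa [Set.inter_comm]⟩⟩
  loopless := ⟨fun C h => h.1 rfl⟩

/-- A graph is a circle graph if it is isomorphic to the intersection graph of some
family of chords of the circle, i.e. to an induced subgraph of the circle graph. -/
def IsCircleGraph {V : Type*} (G : SimpleGraph V) : Prop :=
  ∃ F : Set Chord, Nonempty (G ≃g (CircleGraph.induce F))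

/-!
Parametrise the circle by `t ↦ exp (2πit)` with `t ∈ (-1/2, 1/2]`. The signed area of the
triangle on the points with parameters `a < b` and `t` is `4 sin π(b-a) sin π(t-a) sin π(t-b)`,
so it is negative for `t ∈ (a, b)` and positive for `t ∉ [a, b]`. Hence the chords with parameters
`a < b` and `c < d` meet iff they share an endpoint or exactly one of `c`, `d` lies in `(a, b)`:
adjacency in the circle graph only depends on the relative order of the endpoint parameters.
The endpoint parameters of countably many chords form a countable linear order, which embeds into
the rationals of `(-1/2, 1/2)`; moving every endpoint along this embedding gives rational chords
with the same intersection graph.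
-/

open Set Real

section ChordsMeet

variable {α β : Type*} [LinearOrder α] [LinearOrder β]

def ChordsMeet (a b c d : α) : Prop :=
  a = c ∨ a = d ∨ b = c ∨ b = d ∨ ¬(c ∈ Ioo a b ↔ d ∈ Ioo a b)

theorem StrictMono.chordsMeet_iff {f : α → β} (hf : StrictMono f) {a b c d : α} :
    ChordsMeet (f a) (f b) (f c) (f d) ↔ ChordsMeet a b c d := by
  simp only [ChordsMeet, mem_Ioo, hf.injective.eq_iff, hf.lt_iff_lt]

theorem StrictMono.ne_and_chordsMeet_iff {f : α → β} (hf : StrictMono f) {a b c d : α} :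
    (f a, f b) ≠ (f c, f d) ∧ ChordsMeet (f a) (f b) (f c) (f d) ↔
      (a, b) ≠ (c, d) ∧ ChordsMeet a b c d := by
  simp only [Ne, Prod.ext_iff, hf.injective.eq_iff, hf.chordsMeet_iff]

theorem mem_Ioo_iff_mem_Icc {a b t : α} (ha : t ≠ a) (hb : t ≠ b) : t ∈ Ioo a b ↔ t ∈ Icc a b :=
  ⟨fun h => Ioo_subset_Icc_self h, fun ⟨h₁, h₂⟩ => ⟨h₁.lt_of_ne' ha, h₂.lt_of_ne hb⟩⟩

end ChordsMeet

/-- Twice the signed area of the triangle `z w x`, positive when `x` lies to the left of the line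
from `z` to `w`. -/
def signedArea (z w x : ℂ) : ℝ :=
  (w - z).re * (x - z).im - (w - z).im * (x - z).re

theorem signedArea_swap (z w x : ℂ) : signedArea w z x = -signedArea z w x := by
  simp only [signedArea, Complex.sub_re, Complex.sub_im]
  ring

theorem signedArea_add_smul {s t : ℝ} (hst : s + t = 1) (z w x y : ℂ) :
    signedArea z w (s • x + t • y) = s * signedArea z w x + t * signedArea z w y := by
  obtain rfl : t = 1 - s := by linarith
  simp only [signedArea, Complex.real_smul, Complex.sub_re, Complex.sub_im, Complex.add_re,
    Complex.add_im, Complex.mul_re, Complex.mul_im, Complex.ofReal_re, Complex.ofReal_im]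
  ring

theorem signedArea_eq_zero_of_mem_segment {z w x : ℂ} (hx : x ∈ segment ℝ z w) :
    signedArea z w x = 0 := by
  obtain ⟨s, t, -, -, hst, rfl⟩ := hx
  rw [signedArea_add_smul hst]
  simp only [signedArea, sub_self, Complex.zero_re, Complex.zero_im]
  ring

theorem signedArea_pos_of_mem_segment {z w x y p : ℂ} (hx : 0 < signedArea z w x)
    (hy : 0 < signedArea z w y) (hp : p ∈ segment ℝ x y) : 0 < signedArea z w p := by
  obtain ⟨s, t, hs, ht, hst, rfl⟩ := hp
  rw [signedArea_add_smul hst]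
  rcases hs.eq_or_lt with rfl | hs
  · obtain rfl : t = 1 := by linarith
    simpa using hy
  · exact add_pos_of_pos_of_nonneg (mul_pos hs hx) (mul_nonneg ht hy.le)

theorem mem_segment_of_signedArea_eq_zero {z w x : ℂ} (hzw : z ≠ w) (hw : ‖w‖ = ‖z‖)
    (hx : ‖x‖ ≤ ‖z‖) (h : signedArea z w x = 0) : x ∈ segment ℝ z w := by
  set u := w - z with hu
  set v := x - z with hv
  have hu0 : 0 < u.re ^ 2 + u.im ^ 2 := by
    have := Complex.normSq_pos.2 (sub_ne_zero.2 hzw.symm)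
    rw [Complex.normSq_apply] at this
    nlinarith
  have hcross : u.re * v.im = u.im * v.re := by
    simp only [signedArea, ← hu, ← hv] at h
    linarith
  set r := (v.re * u.re + v.im * u.im) / (u.re ^ 2 + u.im ^ 2) with hr_def
  have hre : x.re = z.re + r * u.re := by
    have : x.re = z.re + v.re := by simp [hv]
    rw [this, hr_def]
    field_simp
    linear_combination (-u.im) * hcross
  have him : x.im = z.im + r * u.im := by
    have : x.im = z.im + v.im := by simp [hv]
    rw [this, hr_def]
    field_simp
    linear_combination u.re * hcross
  have hnorm : ∀ v : ℂ, ‖v‖ ^ 2 = v.re ^ 2 + v.im ^ 2 := fun v => by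
    rw [Complex.sq_norm, Complex.normSq_apply]; ring
  have hw2 : (z.re + u.re) ^ 2 + (z.im + u.im) ^ 2 = z.re ^ 2 + z.im ^ 2 := by
    have hwre : w.re = z.re + u.re := by simp [hu]
    have hwim : w.im = z.im + u.im := by simp [hu]
    rw [← hwre, ← hwim, ← hnorm, ← hnorm, hw]
  have hx2 : (z.re + r * u.re) ^ 2 + (z.im + r * u.im) ^ 2 ≤ z.re ^ 2 + z.im ^ 2 := by
    rw [← hre, ← him, ← hnorm, ← hnorm]
    gcongr
  have hr : r * (r - 1) * (u.re ^ 2 + u.im ^ 2) ≤ 0 := by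
    linear_combination hx2 - r * hw2
  have hr' : r * (r - 1) ≤ 0 := nonpos_of_mul_nonpos_left hr hu0
  refine ⟨1 - r, r, by nlinarith, by nlinarith, by ring, ?_⟩
  apply Complex.ext <;> simp [hre, him, hu] <;> ring

theorem segment_inter_nonempty_of_signedArea_neg_pos {z w x y : ℂ} (hzw : z ≠ w)
    (hw : ‖w‖ = ‖z‖) (hx : ‖x‖ ≤ ‖z‖) (hy : ‖y‖ ≤ ‖z‖) (hxl : signedArea z w x < 0)
    (hyl : 0 < signedArea z w y) : (segment ℝ z w ∩ segment ℝ x y).Nonempty := by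
  set d := signedArea z w y - signedArea z w x
  have hd : 0 < d := by linarith
  have hs : 0 ≤ signedArea z w y / d := div_nonneg hyl.le hd.le
  have ht : 0 ≤ -signedArea z w x / d := div_nonneg (by linarith) hd.le
  have hst : signedArea z w y / d + -signedArea z w x / d = 1 := by
    field_simp; ring
  have hp : _ ∈ segment ℝ x y := ⟨_, _, hs, ht, hst, rfl⟩
  refine ⟨_, mem_segment_of_signedArea_eq_zero hzw hw ?_ ?_, hp⟩
  · have hball := (convex_closedBall (0 : ℂ) ‖z‖).segment_subset
      (mem_closedBall_zero_iff.2 hx) (mem_closedBall_zero_iff.2 hy) hp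
    exact mem_closedBall_zero_iff.1 hball
  · rw [signedArea_add_smul hst]
    field_simp
    ring

local notation "𝕁" => Ioc (-(1 / 2) : ℝ) (1 / 2)

def circlePoint (t : ℝ) : ℂ := Complex.exp (2 * π * Complex.I * t)

theorem circlePoint_eq_exp_mul_I (t : ℝ) :
    circlePoint t = Complex.exp ((2 * π * t : ℝ) * Complex.I) := by
  rw [circlePoint]; push_cast; ring_nf

theorem norm_circlePoint (t : ℝ) : ‖circlePoint t‖ = 1 := by
  rw [circlePoint_eq_exp_mul_I, Complex.norm_exp_ofReal_mul_I]

theorem arg_circlePoint {t : ℝ} (ht : t ∈ 𝕁) : (circlePoint t).arg = 2 * π * t := by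
  rw [circlePoint_eq_exp_mul_I, Complex.arg_exp_mul_I, toIocMod_eq_self]
  obtain ⟨h₀, h₁⟩ := ht
  constructor <;> nlinarith [pi_pos]

theorem circlePoint_injOn : InjOn circlePoint 𝕁 := fun s hs t ht hst => by
  have := congrArg Complex.arg hst
  rw [arg_circlePoint hs, arg_circlePoint ht] at this
  nlinarith [pi_pos]

theorem exists_circlePoint_eq {z : ℂ} (hz : ‖z‖ = 1) : ∃ t ∈ 𝕁, circlePoint t = z := by
  refine ⟨z.arg / (2 * π), ⟨?_, ?_⟩, ?_⟩
  · rw [lt_div_iff₀ (by positivity)]; linarith [Complex.neg_pi_lt_arg z]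
  · rw [div_le_iff₀ (by positivity)]; linarith [Complex.arg_le_pi z]
  · rw [circlePoint_eq_exp_mul_I, mul_div_cancel₀ _ (by positivity)]
    simpa [hz] using Complex.norm_mul_exp_arg_mul_I z

theorem signedArea_circlePoint (a b t : ℝ) :
    signedArea (circlePoint a) (circlePoint b) (circlePoint t) =
      4 * sin (π * (b - a)) * sin (π * (t - a)) * sin (π * (t - b)) := by
  simp only [signedArea, Complex.sub_re, Complex.sub_im, circlePoint_eq_exp_mul_I,
    Complex.exp_ofReal_mul_I_re, Complex.exp_ofReal_mul_I_im]
  simp only [show ∀ s, 2 * π * s = 2 * (π * s) from fun s => by ring, mul_sub,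
    sin_two_mul, cos_two_mul', sin_sub]
  set A := π * a; set B := π * b; set T := π * t
  -- homogenise both sides to degree two in each of the three angles
  linear_combination
    (-((cos B ^ 2 - sin B ^ 2) * (2 * sin T * cos T) -
      (2 * sin B * cos B) * (cos T ^ 2 - sin T ^ 2))) * sin_sq_add_cos_sq A
    - ((2 * sin B * cos B) * (cos A ^ 2 - sin A ^ 2) -
      (cos B ^ 2 - sin B ^ 2) * (2 * sin A * cos A)) * sin_sq_add_cos_sq T
    - ((2 * sin A * cos A) * (cos T ^ 2 - sin T ^ 2) -
      (cos A ^ 2 - sin A ^ 2) * (2 * sin T * cos T)) * sin_sq_add_cos_sq B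

theorem sin_pi_mul_pos {x : ℝ} (h₀ : 0 < x) (h₁ : x < 1) : 0 < sin (π * x) :=
  sin_pos_of_pos_of_lt_pi (by positivity) (by nlinarith [pi_pos])

theorem sin_pi_mul_neg {x : ℝ} (h₀ : x < 0) (h₁ : -1 < x) : sin (π * x) < 0 :=
  sin_neg_of_neg_of_neg_pi_lt (by nlinarith [pi_pos]) (by nlinarith [pi_pos])

theorem signedArea_circlePoint_neg {a b t : ℝ} (ha : a ∈ 𝕁) (hb : b ∈ 𝕁) (ht : t ∈ Ioo a b) :
    signedArea (circlePoint a) (circlePoint b) (circlePoint t) < 0 := by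
  obtain ⟨ha₀, ha₁⟩ := ha; obtain ⟨hb₀, hb₁⟩ := hb; obtain ⟨hat, htb⟩ := ht
  rw [signedArea_circlePoint]
  exact mul_neg_of_pos_of_neg
    (mul_pos (mul_pos four_pos (sin_pi_mul_pos (by linarith) (by linarith)))
      (sin_pi_mul_pos (by linarith) (by linarith)))
    (sin_pi_mul_neg (by linarith) (by linarith))

theorem signedArea_circlePoint_pos {a b t : ℝ} (ha : a ∈ 𝕁) (hb : b ∈ 𝕁) (ht : t ∈ 𝕁)
    (hab : a < b) (hto : t ∉ Icc a b) :
    0 < signedArea (circlePoint a) (circlePoint b) (circlePoint t) := by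
  obtain ⟨ha₀, ha₁⟩ := ha; obtain ⟨hb₀, hb₁⟩ := hb; obtain ⟨ht₀, ht₁⟩ := ht
  rw [signedArea_circlePoint]
  have hba : 0 < 4 * sin (π * (b - a)) :=
    mul_pos four_pos (sin_pi_mul_pos (by linarith) (by linarith))
  rw [mem_Icc, not_and_or, not_le, not_le] at hto
  rcases hto with hta | hbt
  · exact mul_pos_of_neg_of_neg (mul_neg_of_pos_of_neg hba
      (sin_pi_mul_neg (by linarith) (by linarith))) (sin_pi_mul_neg (by linarith) (by linarith))
  · exact mul_pos (mul_pos hba (sin_pi_mul_pos (by linarith) (by linarith)))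
      (sin_pi_mul_pos (by linarith) (by linarith))

theorem segment_circlePoint_inter_nonempty_iff {a b c d : ℝ} (ha : a ∈ 𝕁) (hb : b ∈ 𝕁)
    (hc : c ∈ 𝕁) (hd : d ∈ 𝕁) (hab : a < b) (hcd : c < d) :
    (segment ℝ (circlePoint a) (circlePoint b) ∩
      segment ℝ (circlePoint c) (circlePoint d)).Nonempty ↔ ChordsMeet a b c d := by
  constructor
  · rintro ⟨x, hxab, hxcd⟩
    by_contra hmeet
    simp only [ChordsMeet, not_or, not_not] at hmeet
    obtain ⟨hac, had, hbc, hbd, hcd_ab⟩ := hmeet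
    have hx : signedArea (circlePoint a) (circlePoint b) x = 0 :=
      signedArea_eq_zero_of_mem_segment hxab
    by_cases hcab : c ∈ Ioo a b
    · have hdab := hcd_ab.1 hcab
      rw [← neg_eq_zero, ← signedArea_swap] at hx
      refine (signedArea_pos_of_mem_segment ?_ ?_ hxcd).ne' hx
      all_goals rw [signedArea_swap, neg_pos]; exact signedArea_circlePoint_neg ha hb ‹_›
    · have hdab : d ∉ Ioo a b := fun h => hcab (hcd_ab.2 h)
      rw [mem_Ioo_iff_mem_Icc (Ne.symm hac) (Ne.symm hbc)] at hcab
      rw [mem_Ioo_iff_mem_Icc (Ne.symm had) (Ne.symm hbd)] at hdab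
      exact (signedArea_pos_of_mem_segment (signedArea_circlePoint_pos ha hb hc hab hcab)
        (signedArea_circlePoint_pos ha hb hd hab hdab) hxcd).ne' hx
  · intro hmeet
    by_cases hshared : a = c ∨ a = d ∨ b = c ∨ b = d
    · rcases hshared with rfl | rfl | rfl | rfl
      · exact ⟨_, left_mem_segment ℝ _ _, left_mem_segment ℝ _ _⟩
      · exact ⟨_, left_mem_segment ℝ _ _, right_mem_segment ℝ _ _⟩
      · exact ⟨_, right_mem_segment ℝ _ _, left_mem_segment ℝ _ _⟩
      · exact ⟨_, right_mem_segment ℝ _ _, right_mem_segment ℝ _ _⟩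
    simp only [not_or] at hshared
    obtain ⟨hac, had, hbc, hbd⟩ := hshared
    simp only [ChordsMeet, hac, had, hbc, hbd, false_or] at hmeet
    have hab' : circlePoint a ≠ circlePoint b := hab.ne ∘ circlePoint_injOn ha hb
    have hnorm := norm_circlePoint
    by_cases hcab : c ∈ Ioo a b
    · have hdab : d ∉ Icc a b := by
        rw [← mem_Ioo_iff_mem_Icc (Ne.symm had) (Ne.symm hbd)]
        exact fun hdab => hmeet (iff_of_true hcab hdab)
      exact segment_inter_nonempty_of_signedArea_neg_pos hab' (by simp [hnorm])
        (by simp [hnorm]) (by simp [hnorm]) (signedArea_circlePoint_neg ha hb hcab)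
        (signedArea_circlePoint_pos ha hb hd hab hdab)
    · have hdab : d ∈ Ioo a b := by_contra fun hdab => hmeet (iff_of_false hcab hdab)
      rw [mem_Ioo_iff_mem_Icc (Ne.symm hac) (Ne.symm hbc)] at hcab
      rw [segment_symm ℝ (circlePoint c)]
      exact segment_inter_nonempty_of_signedArea_neg_pos hab' (by simp [hnorm])
        (by simp [hnorm]) (by simp [hnorm]) (signedArea_circlePoint_neg ha hb hdab)
        (signedArea_circlePoint_pos ha hb hc hab hcab)

theorem circlePoint_sym2_eq_iff {a b c d : ℝ} (ha : a ∈ 𝕁) (hb : b ∈ 𝕁) (hc : c ∈ 𝕁)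
    (hd : d ∈ 𝕁) (hab : a < b) (hcd : c < d) :
    s(circlePoint a, circlePoint b) = s(circlePoint c, circlePoint d) ↔ a = c ∧ b = d := by
  rw [Sym2.eq_iff, circlePoint_injOn.eq_iff ha hc, circlePoint_injOn.eq_iff hb hd,
    circlePoint_injOn.eq_iff ha hd, circlePoint_injOn.eq_iff hb hc]
  refine ⟨fun h => h.resolve_right ?_, Or.inl⟩
  rintro ⟨rfl, rfl⟩
  exact hab.not_gt hcd

theorem Chord.exists_angles (C : Chord) :
    ∃ a ∈ 𝕁, ∃ b ∈ 𝕁, a < b ∧ C.1 = s(circlePoint a, circlePoint b) := by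
  obtain ⟨p, hp, hdiag⟩ := C
  induction p using Sym2.ind with
  | _ x y =>
    obtain ⟨a, ha, rfl⟩ := exists_circlePoint_eq (hp x (Sym2.mem_mk_left x y))
    obtain ⟨b, hb, rfl⟩ := exists_circlePoint_eq (hp y (Sym2.mem_mk_right _ y))
    rcases lt_trichotomy a b with hab | rfl | hba
    · exact ⟨a, ha, b, hb, hab, rfl⟩
    · exact absurd (Sym2.mk_isDiag_iff.2 rfl) hdiag
    · exact ⟨b, hb, a, ha, hba, Sym2.eq_swap⟩

theorem Chord.ext_iff {C D : Chord} : C = D ↔ C.1 = D.1 := Subtype.ext_iff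

theorem circleGraph_adj_iff {C D : Chord} {a b c d : ℝ} (ha : a ∈ 𝕁) (hb : b ∈ 𝕁) (hc : c ∈ 𝕁)
    (hd : d ∈ 𝕁) (hab : a < b) (hcd : c < d) (hC : C.1 = s(circlePoint a, circlePoint b))
    (hD : D.1 = s(circlePoint c, circlePoint d)) :
    CircleGraph.Adj C D ↔ (a, b) ≠ (c, d) ∧ ChordsMeet a b c d := by
  change C ≠ D ∧ (chordSegment C.1 ∩ chordSegment D.1).Nonempty ↔ _
  rw [Ne, Chord.ext_iff, hC, hD, circlePoint_sym2_eq_iff ha hb hc hd hab hcd, Ne, Prod.ext_iff]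
  exact Iff.rfl.and (segment_circlePoint_inter_nonempty_iff ha hb hc hd hab hcd)

theorem circlePoint_ratCast (q : ℚ) :
    circlePoint q = Complex.exp (2 * π * Complex.I * q) := by
  simp [circlePoint]

theorem circlePoint_mem_Q1 (q : ℚ) : circlePoint q ∈ Q1 := ⟨q, circlePoint_ratCast q⟩

theorem Q1_subset_S1 : Q1 ⊆ S1 := by
  rintro _ ⟨q, rfl⟩
  rw [← circlePoint_ratCast]
  exact norm_circlePoint q

theorem countable_chordQ : Countable ChordQ := by
  have h : {p : Sym2 ℂ | (∀ z ∈ p, z ∈ Q1) ∧ ¬p.IsDiag} ⊆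
      range fun q : ℚ × ℚ => s(circlePoint q.1, circlePoint q.2) := by
    rintro p ⟨hp, -⟩
    induction p using Sym2.ind with
    | _ x y =>
      obtain ⟨q, rfl⟩ := hp x (Sym2.mem_mk_left x y)
      obtain ⟨r, rfl⟩ := hp _ (Sym2.mem_mk_right _ _)
      exact ⟨(q, r), by simp only [circlePoint_ratCast]⟩
  exact ((countable_range _).mono h).to_subtype

def ChordQ.ofRat (q r : ℚ) (h : circlePoint q ≠ circlePoint r) : ChordQ :=
  ⟨s(circlePoint q, circlePoint r), fun z hz => by
    rcases Sym2.mem_iff.1 hz with rfl | rfl <;> exact circlePoint_mem_Q1 _,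
    Sym2.mk_isDiag_iff.not.2 h⟩

def ChordQ.toChord (C : ChordQ) : Chord :=
  ⟨C.1, fun z hz => Q1_subset_S1 (C.2.1 z hz), C.2.2⟩

theorem ChordQ.toChord_injective : Function.Injective ChordQ.toChord :=
  fun _ _ h => Subtype.ext (Chord.ext_iff.1 h)

def rationalCircleGraphEmbedding : RationalCircleGraph ↪g CircleGraph where
  toFun := ChordQ.toChord
  inj' := ChordQ.toChord_injective
  map_rel_iff' := ChordQ.toChord_injective.ne_iff.and Iff.rfl

theorem exists_ratCast_strictMono (T : Set ℝ) [Countable T] :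
    ∃ φ : T → ℚ, StrictMono φ ∧ ∀ t, (φ t : ℝ) ∈ 𝕁 := by
  have : Infinite (Ioo (-(1 / 2) : ℚ) (1 / 2)) := (Ioo_infinite (by norm_num)).to_subtype
  obtain ⟨φ⟩ := Order.embedding_from_countable_to_dense T (Ioo (-(1 / 2) : ℚ) (1 / 2))
  refine ⟨fun t => φ t, fun s t hst => φ.strictMono hst, fun t => ?_⟩
  obtain ⟨h₀, h₁⟩ := (φ t).2
  have h₀' := (Rat.cast_lt (K := ℝ)).2 h₀
  have h₁' := (Rat.cast_le (K := ℝ)).2 h₁.le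
  push_cast at h₀' h₁'
  exact ⟨h₀', h₁'⟩

theorem nonempty_embedding_rationalCircleGraph {V : Type*} [Countable V] {G : SimpleGraph V}
    (e : G ↪g CircleGraph) : Nonempty (G ↪g RationalCircleGraph) := by
  choose a ha b hb hab he using fun v => (e v).exists_angles
  let T : Set ℝ := range a ∪ range b
  have : Countable T := ((countable_range a).union (countable_range b)).to_subtype
  obtain ⟨φ, hφ, hφJ⟩ := exists_ratCast_strictMono T
  have hψ : StrictMono fun t => (φ t : ℝ) := Rat.cast_strictMono.comp hφ
  let A (v : V) : T := ⟨a v, .inl ⟨v, rfl⟩⟩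
  let B (v : V) : T := ⟨b v, .inr ⟨v, rfl⟩⟩
  have hAB (v : V) : (φ (A v) : ℝ) < φ (B v) := hψ (hab v)
  let f (v : V) : ChordQ :=
    .ofRat (φ (A v)) (φ (B v)) ((hAB v).ne ∘ circlePoint_injOn (hφJ _) (hφJ _))
  have hf (u v : V) : RationalCircleGraph.Adj (f u) (f v) ↔ G.Adj u v := by
    rw [← rationalCircleGraphEmbedding.map_adj_iff, ← e.map_adj_iff,
      circleGraph_adj_iff (ha u) (hb u) (ha v) (hb v) (hab u) (hab v) (he u) (he v),
      circleGraph_adj_iff (hφJ _) (hφJ _) (hφJ _) (hφJ _) (hAB u) (hAB v) rfl rfl]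
    exact hψ.ne_and_chordsMeet_iff.trans
      ((Subtype.strictMono_coe (· ∈ T)).ne_and_chordsMeet_iff (a := A u) (b := B u) (c := A v)
        (d := B v)).symm
  have hinj : Function.Injective f := fun u v huv => by
    obtain ⟨hA, hB⟩ := (circlePoint_sym2_eq_iff (hφJ _) (hφJ _) (hφJ _) (hφJ _) (hAB u)
      (hAB v)).1 (Chord.ext_iff.1 (congrArg ChordQ.toChord huv))
    apply e.injective
    rw [Chord.ext_iff, he u, he v, show a u = a v from congrArg Subtype.val (hψ.injective hA),
      show b u = b v from congrArg Subtype.val (hψ.injective hB)]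
  exact ⟨⟨⟨f, hinj⟩, fun {u v} => hf u v⟩⟩

/-- `𝒞_ℚ` is strongly universal for the class of countable circle
graphs: it is itself a countable circle graph, and every countable circle graph is
isomorphic to an induced subgraph of `𝒞_ℚ`. -/
theorem rationalCircleGraph_stronglyUniversal :
    Countable ChordQ ∧ IsCircleGraph RationalCircleGraph ∧
    ∀ (V : Type) [Countable V] (G : SimpleGraph V), IsCircleGraph G →
      ∃ S : Set ChordQ, Nonempty (G ≃g (RationalCircleGraph.induce S)) := by
  refine ⟨countable_chordQ, ⟨_, ⟨rationalCircleGraphEmbedding.isoInduceRange⟩⟩, ?_⟩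
  rintro V _ G ⟨F, ⟨φ⟩⟩
  obtain ⟨f⟩ := nonempty_embedding_rationalCircleGraph
    (φ.toEmbedding.trans (SimpleGraph.Embedding.induce F))
  exact ⟨_, ⟨f.isoInduceRange⟩⟩
end
end

section
/- Let G be a countable graph such that every finite induced subgraph of G is a circle graph. Then G is a circle graph. -/
/-!
Whether two chords meet depends only on the order of their endpoints. Writing the endpoints as
`exp (θ i)` with `θ ∈ (-π, π]`, the chords `{a, b}` and `{c, d}` meet iff
`(a - c) (a - d) (b - c) (b - d) ≤ 0`: the cross product deciding on which side of the chord
`{a, b}` the point `c` lies is `4 sin ((b - a) / 2) sin ((c - a) / 2) sin ((c - b) / 2)`, which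
has the sign of `(b - a) (c - a) (c - b)`. Hence a graph on `V` is a circle graph iff the endpoints
`V × Bool` carry a total preorder subject to conditions each involving at most three vertices
(`IsChordDiagram`).

Encoded as points of the compact space `(V × Bool) × (V × Bool) → Bool`, the preorders that work
for a finite set of vertices form a nonempty closed set, and these sets are directed, so one
preorder works for all finite induced subgraphs at once, hence for `G`. As `V` is countable, this
preorder embeds into `ℚ`, and `2 * arctan` turns it into actual angles.
-/

noncomputable section

open Function Set Real SimpleGraph

def cross (u v : ℂ) : ℝ := u.re * v.im - u.im * v.re

theorem div_mem_Icc_of_mul_sub_neg {K : Type*} [Field K] [LinearOrder K] [IsStrictOrderedRing K]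
    {x y : K} (h : x * (x - y) < 0) : x / y ∈ Icc 0 1 := by
  rcases lt_trichotomy y 0 with hy | rfl | hy
  · exact ⟨div_nonneg_of_nonpos (by nlinarith) hy.le, (div_le_one_of_neg hy).2 (by nlinarith)⟩
  · nlinarith [mul_self_nonneg x]
  · exact ⟨div_nonneg (by nlinarith) hy.le, (div_le_one hy).2 (by nlinarith)⟩

theorem segment_inter_nonempty_of_cross_mul_cross_neg {p q r s : ℂ}
    (h₁ : cross (q - p) (r - p) * cross (q - p) (s - p) < 0)
    (h₂ : cross (s - r) (p - r) * cross (s - r) (q - r) < 0) :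
    (segment ℝ p q ∩ segment ℝ r s).Nonempty := by
  set A := cross (q - p) (r - p)
  set C := cross (s - r) (p - r)
  set δ := cross (q - p) (s - r)
  have hC : C * (C - δ) < 0 := by
    convert h₂ using 2; simp only [C, δ, cross, Complex.sub_re, Complex.sub_im]; ring
  have hA : -A * (-A - δ) < 0 := by
    convert h₁ using 1; simp only [A, δ, cross, Complex.sub_re, Complex.sub_im]; ring
  have hδ : δ ≠ 0 := by
    rintro hδ
    rw [hδ, sub_zero] at hC
    exact (mul_self_nonneg C).not_gt hC
  -- Cramer's rule: the lines `pq` and `rs` meet at the parameters `C / δ` and `-A / δ`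
  have hre : δ * (r.re - p.re) = C * (q.re - p.re) + A * (s.re - r.re) := by
    simp only [A, C, δ, cross, Complex.sub_re, Complex.sub_im]; ring
  have him : δ * (r.im - p.im) = C * (q.im - p.im) + A * (s.im - r.im) := by
    simp only [A, C, δ, cross, Complex.sub_re, Complex.sub_im]; ring
  refine ⟨p + (C / δ) • (q - p), ?_, ?_⟩ <;> rw [segment_eq_image']
  · exact ⟨_, div_mem_Icc_of_mul_sub_neg hC, rfl⟩
  · refine ⟨-A / δ, div_mem_Icc_of_mul_sub_neg hA, Complex.ext ?_ ?_⟩ <;>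
      simp only [Complex.add_re, Complex.add_im, Complex.sub_re, Complex.sub_im, Complex.real_smul,
        Complex.mul_re, Complex.mul_im, Complex.ofReal_re, Complex.ofReal_im, zero_mul,
        sub_zero] <;>
      field_simp
    · linear_combination hre
    · linear_combination him

theorem disjoint_segment_of_cross_mul_cross_pos {p q r s : ℂ}
    (h : 0 < cross (q - p) (r - p) * cross (q - p) (s - p)) :
    Disjoint (segment ℝ p q) (segment ℝ r s) := by
  set A := cross (q - p) (r - p)
  set B := cross (q - p) (s - p)
  rw [Set.disjoint_left]
  rintro _ ⟨a, b, -, -, hab, rfl⟩ ⟨c, d, hc, hd, hcd, hx⟩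
  obtain rfl := eq_sub_of_add_eq hab
  obtain rfl := eq_sub_of_add_eq hcd
  -- `cross (q - p) (· - p)` is affine, vanishes on the line `pq`, and is `A` at `r` and `B` at `s`
  have key : (1 - d) * A + d * B = 0 := by
    have := congrArg (fun x => cross (q - p) (x - p)) hx
    simp only [A, B, cross, Complex.add_re, Complex.add_im, Complex.sub_re, Complex.sub_im,
      Complex.real_smul, Complex.mul_re, Complex.mul_im, Complex.ofReal_re, Complex.ofReal_im,
      zero_mul, sub_zero, add_zero] at this ⊢
    linear_combination this
  have : (1 - d) * A ^ 2 + d * B ^ 2 + A * B = 0 := by linear_combination (A + B) * key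
  nlinarith [mul_nonneg hc (sq_nonneg A), mul_nonneg hd (sq_nonneg B)]

theorem circleExp_re (t : ℝ) : (Circle.exp t : ℂ).re = cos t := by
  rw [Circle.coe_exp, Complex.exp_ofReal_mul_I_re]

theorem circleExp_im (t : ℝ) : (Circle.exp t : ℂ).im = sin t := by
  rw [Circle.coe_exp, Complex.exp_ofReal_mul_I_im]

theorem cross_circleExp_sub (a b c : ℝ) :
    cross (Circle.exp b - Circle.exp a) (Circle.exp c - Circle.exp a) =
      4 * sin ((b - a) / 2) * sin ((c - a) / 2) * sin ((c - b) / 2) := by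
  have h₁ := cos_sub_cos b a
  have h₂ := sin_sub_sin c a
  have h₃ := sin_sub_sin b a
  have h₄ := cos_sub_cos c a
  have h₅ : sin ((c - b) / 2) = sin ((c + a) / 2 - (b + a) / 2) := by ring_nf
  simp only [cross, Complex.sub_re, Complex.sub_im, circleExp_re, circleExp_im]
  rw [h₁, h₂, h₃, h₄, h₅, sin_sub]
  ring

theorem sign_sin_half_sub {x y : ℝ} (hx : x ∈ Ioc (-π) π) (hy : y ∈ Ioc (-π) π) :
    SignType.sign (sin ((x - y) / 2)) = SignType.sign (x - y) := by
  obtain ⟨hx₁, hx₂⟩ := hx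
  obtain ⟨hy₁, hy₂⟩ := hy
  rcases lt_trichotomy x y with h | rfl | h
  · rw [sign_neg (sin_neg_of_neg_of_neg_pi_lt (by linarith) (by linarith)), sign_neg (by linarith)]
  · simp
  · rw [sign_pos (sin_pos_of_pos_of_lt_pi (by linarith) (by linarith)), sign_pos (by linarith)]

theorem sign_cross_circleExp_sub {a b c : ℝ} (ha : a ∈ Ioc (-π) π) (hb : b ∈ Ioc (-π) π)
    (hc : c ∈ Ioc (-π) π) :
    SignType.sign (cross (Circle.exp b - Circle.exp a) (Circle.exp c - Circle.exp a)) =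
      SignType.sign ((b - a) * (c - a) * (c - b)) := by
  simp only [cross_circleExp_sub, sign_mul, sign_sin_half_sub hb ha, sign_sin_half_sub hc ha,
    sign_sin_half_sub hc hb, sign_pos (four_pos : (0 : ℝ) < 4), one_mul]

/-- The product vanishes iff the chords share an endpoint and is negative iff their endpoints
interleave. -/
theorem segment_circleExp_inter_nonempty_iff {a b c d : ℝ} (ha : a ∈ Ioc (-π) π)
    (hb : b ∈ Ioc (-π) π) (hc : c ∈ Ioc (-π) π) (hd : d ∈ Ioc (-π) π) (hab : a ≠ b)
    (hcd : c ≠ d) :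
    (segment ℝ (Circle.exp a : ℂ) (Circle.exp b) ∩
        segment ℝ (Circle.exp c : ℂ) (Circle.exp d)).Nonempty ↔
      (a - c) * (a - d) * (b - c) * (b - d) ≤ 0 := by
  set Q := (a - c) * (a - d) * (b - c) * (b - d) with hQ
  have h₁ : SignType.sign (cross (Circle.exp b - Circle.exp a) (Circle.exp c - Circle.exp a) *
      cross (Circle.exp b - Circle.exp a) (Circle.exp d - Circle.exp a)) =
      SignType.sign ((b - a) ^ 2 * Q) := by
    rw [sign_mul, sign_cross_circleExp_sub ha hb hc, sign_cross_circleExp_sub ha hb hd, ← sign_mul,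
      hQ]
    ring_nf
  have h₂ : SignType.sign (cross (Circle.exp d - Circle.exp c) (Circle.exp a - Circle.exp c) *
      cross (Circle.exp d - Circle.exp c) (Circle.exp b - Circle.exp c)) =
      SignType.sign ((d - c) ^ 2 * Q) := by
    rw [sign_mul, sign_cross_circleExp_sub hc hd ha, sign_cross_circleExp_sub hc hd hb, ← sign_mul,
      hQ]
    ring_nf
  have hba : 0 < (b - a) ^ 2 := sq_pos_of_ne_zero (sub_ne_zero.2 hab.symm)
  have hdc : 0 < (d - c) ^ 2 := sq_pos_of_ne_zero (sub_ne_zero.2 hcd.symm)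
  rcases lt_trichotomy Q 0 with hQneg | hQzero | hQpos
  · refine iff_of_true (segment_inter_nonempty_of_cross_mul_cross_neg ?_ ?_) hQneg.le
    · rw [← sign_eq_neg_one_iff, h₁, sign_eq_neg_one_iff]
      exact mul_neg_of_pos_of_neg hba hQneg
    · rw [← sign_eq_neg_one_iff, h₂, sign_eq_neg_one_iff]
      exact mul_neg_of_pos_of_neg hdc hQneg
  · refine iff_of_true ?_ hQzero.le
    simp only [hQ, mul_eq_zero, sub_eq_zero] at hQzero
    rcases hQzero with ((rfl | rfl) | rfl) | rfl
    · exact ⟨_, left_mem_segment _ _ _, left_mem_segment _ _ _⟩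
    · exact ⟨_, left_mem_segment _ _ _, right_mem_segment _ _ _⟩
    · exact ⟨_, right_mem_segment _ _ _, left_mem_segment _ _ _⟩
    · exact ⟨_, right_mem_segment _ _ _, right_mem_segment _ _ _⟩
  · refine iff_of_false ?_ hQpos.not_ge
    refine Set.not_nonempty_iff_eq_empty.2 (disjoint_segment_of_cross_mul_cross_pos ?_).inter_eq
    rw [← sign_eq_one_iff, h₁, sign_eq_one_iff]
    exact mul_pos hba hQpos

section EndpointOrder

variable {α : Type*} (r : α → α → Prop)

def WeaklyBetween (a b x : α) : Prop := (r a x ∧ r x b) ∨ (r b x ∧ r x a)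

def WeaklyOutside (a b x : α) : Prop := (r x a ∧ r x b) ∨ (r a x ∧ r b x)

def ChordsCross (a b c d : α) : Prop :=
  (WeaklyBetween r a b c ∧ WeaklyOutside r a b d) ∨ (WeaklyOutside r a b c ∧ WeaklyBetween r a b d)

def SameChord (a b c d : α) : Prop :=
  (r a c ∧ r c a ∧ r b d ∧ r d b) ∨ (r a d ∧ r d a ∧ r b c ∧ r c b)

end EndpointOrder

theorem chordsCross_le_iff {R : Type*} [CommRing R] [LinearOrder R] [IsStrictOrderedRing R]
    (a b c d : R) :
    ChordsCross (· ≤ ·) a b c d ↔ (a - c) * (a - d) * (b - c) * (b - d) ≤ 0 := by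
  have hbetween : ∀ x, WeaklyBetween (· ≤ ·) a b x ↔ (a - x) * (b - x) ≤ 0 := fun x => by
    rw [mul_nonpos_iff, WeaklyBetween, sub_nonneg, sub_nonneg, sub_nonpos, sub_nonpos]; tauto
  have houtside : ∀ x, WeaklyOutside (· ≤ ·) a b x ↔ 0 ≤ (a - x) * (b - x) := fun x => by
    rw [mul_nonneg_iff, WeaklyOutside, sub_nonneg, sub_nonneg, sub_nonpos, sub_nonpos]
  rw [show (a - c) * (a - d) * (b - c) * (b - d) = (a - c) * (b - c) * ((a - d) * (b - d)) by ring,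
    mul_nonpos_iff, ChordsCross, hbetween, hbetween, houtside, houtside]
  tauto

theorem sameChord_le_iff {P : Type*} [PartialOrder P] (a b c d : P) :
    SameChord (· ≤ ·) a b c d ↔ s(a, b) = s(c, d) := by
  rw [Sym2.eq_iff]
  simp only [SameChord, le_antisymm_iff, and_assoc]

/-- A chord model of `G`: vertex `v` is the chord with endpoints `(v, false)` and `(v, true)`,
and `r` is the weak order of all endpoints along the circle cut open at a point. -/
structure IsChordDiagram {W : Type*} (G : SimpleGraph W) (r : W × Bool → W × Bool → Prop) :
    Prop where
  total : ∀ a b, r a b ∨ r b a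
  trans : ∀ a b c, r a b → r b c → r a c
  ends_ne : ∀ v, ¬ (r (v, false) (v, true) ∧ r (v, true) (v, false))
  not_sameChord : ∀ u v, u ≠ v → ¬ SameChord r (u, false) (u, true) (v, false) (v, true)
  adj_iff : ∀ u v, u ≠ v → (G.Adj u v ↔ ChordsCross r (u, false) (u, true) (v, false) (v, true))

namespace IsChordDiagram

variable {V W : Type*} {G : SimpleGraph V} {r : V × Bool → V × Bool → Prop}

theorem comap {G' : SimpleGraph W} (h : IsChordDiagram G r) (φ : G' ↪g G) :
    IsChordDiagram G' (InvImage r (Prod.map φ id)) where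
  total _ _ := h.total _ _
  trans _ _ _ := h.trans _ _ _
  ends_ne v := h.ends_ne (φ v)
  not_sameChord u v huv := h.not_sameChord (φ u) (φ v) (φ.injective.ne huv)
  adj_iff u v huv := φ.map_adj_iff.symm.trans (h.adj_iff (φ u) (φ v) (φ.injective.ne huv))

theorem of_forall_finset
    (h : ∀ s : Finset V,
      IsChordDiagram (G.induce (s : Set V)) (InvImage r (Prod.map Subtype.val id))) :
    IsChordDiagram G r := by
  classical
  exact
    { total := fun a b => (h {a.1, b.1}).total (⟨a.1, by simp⟩, a.2) (⟨b.1, by simp⟩, b.2)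
      trans := fun a b c => (h {a.1, b.1, c.1}).trans
        (⟨a.1, by simp⟩, a.2) (⟨b.1, by simp⟩, b.2) (⟨c.1, by simp⟩, c.2)
      ends_ne := fun v => (h {v}).ends_ne ⟨v, by simp⟩
      not_sameChord := fun u v huv =>
        (h {u, v}).not_sameChord ⟨u, by simp⟩ ⟨v, by simp⟩ (by simpa using huv)
      adj_iff := fun u v huv =>
        (h {u, v}).adj_iff ⟨u, by simp⟩ ⟨v, by simp⟩ (by simpa using huv) }

end IsChordDiagram

theorem isCircleGraph_iff_isIndContained {W : Type*} {G : SimpleGraph W} :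
    IsCircleGraph G ↔ G ⊴ CircleGraph :=
  isIndContained_iff_exists_iso_induce.symm

theorem circleExp_arg {z : ℂ} (hz : z ∈ S1) : (Circle.exp (Complex.arg z) : ℂ) = z := by
  simpa [Circle.coe_exp, hz.out] using Complex.norm_mul_exp_arg_mul_I z

theorem injOn_circleExp : InjOn (fun t => (Circle.exp t : ℂ)) (Ioc (-π) π) := fun x hx y hy h => by
  simpa only [Circle.arg_exp hx.1 hx.2, Circle.arg_exp hy.1 hy.2] using congrArg Complex.arg h

theorem mk_circleExp_eq_mk_circleExp_iff {a b c d : ℝ} (ha : a ∈ Ioc (-π) π)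
    (hb : b ∈ Ioc (-π) π) (hc : c ∈ Ioc (-π) π) (hd : d ∈ Ioc (-π) π) :
    s((Circle.exp a : ℂ), Circle.exp b) = s((Circle.exp c : ℂ), Circle.exp d) ↔
      s(a, b) = s(c, d) := by
  simp only [Sym2.eq_iff, injOn_circleExp.eq_iff ha hc, injOn_circleExp.eq_iff ha hd,
    injOn_circleExp.eq_iff hb hc, injOn_circleExp.eq_iff hb hd]

theorem exists_chord_eq_mk_circleExp {x y : ℝ} (hx : x ∈ Ioc (-π) π) (hy : y ∈ Ioc (-π) π)
    (hxy : x ≠ y) : ∃ C : Chord, C.1 = s((Circle.exp x : ℂ), Circle.exp y) := by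
  refine ⟨⟨_, fun z hz => ?_, fun h => hxy (injOn_circleExp hx hy (Sym2.mk_isDiag_iff.1 h))⟩, rfl⟩
  rcases Sym2.mem_iff.1 hz with rfl | rfl <;> exact Circle.norm_coe _

theorem Chord.exists_eq_mk_circleExp (C : Chord) :
    ∃ x y : ℝ, x ∈ Ioc (-π) π ∧ y ∈ Ioc (-π) π ∧ C.1 = s((Circle.exp x : ℂ), Circle.exp y) := by
  obtain ⟨p, hS, -⟩ := C
  induction p using Sym2.ind with
  | h z w =>
    refine ⟨_, _, Complex.arg_mem_Ioc z, Complex.arg_mem_Ioc w, ?_⟩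
    rw [circleExp_arg (hS z (Sym2.mem_mk_left z w)), circleExp_arg (hS w (Sym2.mem_mk_right z w))]

theorem isChordDiagram_iff {W : Type*} {G : SimpleGraph W} {f : W × Bool → ℝ}
    (hf : ∀ a, f a ∈ Ioc (-π) π) {c : W → Chord}
    (hc : ∀ v, (c v).1 = s((Circle.exp (f (v, false)) : ℂ), Circle.exp (f (v, true)))) :
    IsChordDiagram G (fun a b => f a ≤ f b) ↔
      Injective c ∧ ∀ u v, CircleGraph.Adj (c u) (c v) ↔ G.Adj u v := by
  have hends : ∀ v, f (v, false) ≠ f (v, true) := fun v h =>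
    (c v).2.2 (by rw [hc v, h]; exact Sym2.mk_isDiag_iff.2 rfl)
  have heq : ∀ u v, c u = c v ↔ s(f (u, false), f (u, true)) = s(f (v, false), f (v, true)) :=
    fun u v => by
      rw [← mk_circleExp_eq_mk_circleExp_iff (hf _) (hf _) (hf _) (hf _), ← hc, ← hc]
      exact Subtype.val_injective.eq_iff.symm
  have hadj : ∀ u v, CircleGraph.Adj (c u) (c v) ↔
      c u ≠ c v ∧ ChordsCross (· ≤ ·) (f (u, false)) (f (u, true)) (f (v, false)) (f (v, true)) :=
    fun u v => by
      rw [chordsCross_le_iff, ← segment_circleExp_inter_nonempty_iff (hf _) (hf _) (hf _) (hf _)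
        (hends u) (hends v)]
      show c u ≠ c v ∧ (chordSegment (c u).1 ∩ chordSegment (c v).1).Nonempty ↔ _
      rw [hc u, hc v]
      rfl
  constructor
  · intro h
    have hinj : Injective c := fun u v huv => by_contra fun hne =>
      h.not_sameChord u v hne ((sameChord_le_iff ..).2 ((heq u v).1 huv))
    refine ⟨hinj, fun u v => ?_⟩
    rcases eq_or_ne u v with rfl | hne
    · simp
    · rw [hadj, h.adj_iff u v hne]
      exact and_iff_right (hinj.ne hne)
  · rintro ⟨hinj, hadj'⟩
    exact
      { total := fun a b => le_total (f a) (f b)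
        trans := fun _ _ _ => le_trans
        ends_ne := fun v h' => hends v (le_antisymm h'.1 h'.2)
        not_sameChord := fun u v hne h' => hinj.ne hne ((heq u v).2 ((sameChord_le_iff ..).1 h'))
        adj_iff := fun u v hne => by
          rw [← hadj', hadj]
          exact and_iff_right (hinj.ne hne) }

theorem SimpleGraph.IsIndContained.exists_isChordDiagram {W : Type*} {G : SimpleGraph W}
    (h : G ⊴ CircleGraph) :
    ∃ f : W × Bool → ℝ, (∀ a, f a ∈ Ioc (-π) π) ∧ IsChordDiagram G (fun a b => f a ≤ f b) := by
  obtain ⟨φ⟩ := h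
  choose x y hx hy hφ using fun v => (φ v).exists_eq_mk_circleExp
  have hf : ∀ a : W × Bool, cond a.2 (y a.1) (x a.1) ∈ Ioc (-π) π
    | (v, false) => hx v
    | (v, true) => hy v
  exact ⟨_, hf, (isChordDiagram_iff hf hφ).2 ⟨φ.injective, fun _ _ => φ.map_adj_iff⟩⟩

theorem exists_rat_le_iff_of_total_of_trans {α : Type*} [Countable α] {r : α → α → Prop}
    (htotal : ∀ a b, r a b ∨ r b a) (htrans : ∀ a b c, r a b → r b c → r a c) :
    ∃ g : α → ℚ, ∀ a b, r a b ↔ g a ≤ g b := by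
  classical
  let _ : Preorder α :=
    { le := r
      le_refl := fun a => (htotal a a).elim id id
      le_trans := htrans }
  have : @Std.Total α (· ≤ ·) := ⟨htotal⟩
  have : Countable (Antisymmetrization α (· ≤ ·)) := inferInstanceAs (Countable (Quotient _))
  obtain ⟨e⟩ := Order.embedding_from_countable_to_dense (Antisymmetrization α (· ≤ ·)) ℚ
  exact ⟨fun a => e (toAntisymmetrization (· ≤ ·) a), fun a b =>
    toAntisymmetrization_le_toAntisymmetrization_iff.symm.trans e.le_iff_le.symm⟩

theorem IsChordDiagram.isIndContained_circleGraph {W : Type*} [Countable W] {G : SimpleGraph W}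
    {r : W × Bool → W × Bool → Prop} (h : IsChordDiagram G r) : G ⊴ CircleGraph := by
  obtain ⟨g, hg⟩ := exists_rat_le_iff_of_total_of_trans h.total h.trans
  set f : W × Bool → ℝ := fun a => 2 * arctan (g a)
  have hf : ∀ a, f a ∈ Ioc (-π) π := fun a =>
    ⟨by linarith [neg_pi_div_two_lt_arctan (g a)], by linarith [arctan_lt_pi_div_two (g a)]⟩
  obtain rfl : r = fun a b => f a ≤ f b := by
    ext a b
    rw [hg, ← Rat.cast_le (K := ℝ), ← arctan_strictMono.le_iff_le]
    simp [f]
  choose c hc using fun v => exists_chord_eq_mk_circleExp (hf (v, false)) (hf (v, true))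
    fun h' => h.ends_ne v ⟨h'.le, h'.ge⟩
  obtain ⟨hinj, hadj⟩ := (isChordDiagram_iff hf hc).1 h
  exact ⟨⟨⟨c, hinj⟩, hadj _ _⟩⟩

theorem exists_forall_of_forall_finset {σ ι κ : Type*} [Finite κ]
    (P : Finset σ → (ι → κ) → Prop) (hmono : ∀ ⦃s t⦄, s ⊆ t → ∀ R, P t R → P s R)
    (hloc : ∀ s, ∃ I : Finset ι, ∀ R R', EqOn R R' I → P s R → P s R')
    (hsat : ∀ s, ∃ R, P s R) : ∃ R, ∀ s, P s R := by
  classical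
  let _ : TopologicalSpace κ := ⊥
  have : DiscreteTopology κ := ⟨rfl⟩
  have hclosed : ∀ s, IsClosed {R | P s R} := fun s => by
    obtain ⟨I, hI⟩ := hloc s
    have : {R | P s R} = (fun R (i : I) => R i) ⁻¹' ((fun R (i : I) => R i) '' {R | P s R}) := by
      refine (subset_preimage_image _ _).antisymm ?_
      rintro R' ⟨R, hR, hRR'⟩
      exact hI R R' (fun i hi => congrFun hRR' ⟨i, hi⟩) hR
    rw [this]
    exact (isClosed_discrete _).preimage (continuous_pi fun i => continuous_apply _)
  obtain ⟨R, hR⟩ := IsCompact.nonempty_iInter_of_directed_nonempty_isCompact_isClosed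
    (fun s => {R | P s R})
    (fun s t => ⟨s ∪ t, fun R => hmono Finset.subset_union_left R,
      fun R => hmono Finset.subset_union_right R⟩)
    hsat (fun s => (hclosed s).isCompact) hclosed
  exact ⟨R, mem_iInter.1 hR⟩

section FiniteStages

variable {V : Type*} (G : SimpleGraph V)

/-- `R`, read as a relation on all endpoints, restricts to a chord model of `G.induce s`. Boolean
values make the space of all `R` compact. -/
def IsChordDiagramOn (s : Finset V) (R : (V × Bool) × (V × Bool) → Bool) : Prop :=
  IsChordDiagram (G.induce (s : Set V)) (InvImage (fun a b => R (a, b)) (Prod.map Subtype.val id))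

variable {G}

theorem IsChordDiagramOn.mono {s t : Finset V} {R : (V × Bool) × (V × Bool) → Bool}
    (hst : s ⊆ t) (h : IsChordDiagramOn G t R) : IsChordDiagramOn G s R :=
  IsChordDiagram.comap h (G.induceHomOfLE (Finset.coe_subset.2 hst))

theorem IsChordDiagramOn.congr {s : Finset V} {R R' : (V × Bool) × (V × Bool) → Bool}
    (hRR' : ∀ a b : V × Bool, a.1 ∈ s → b.1 ∈ s → R (a, b) = R' (a, b))
    (h : IsChordDiagramOn G s R) : IsChordDiagramOn G s R' := by
  unfold IsChordDiagramOn at h ⊢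
  convert h using 1
  ext a b
  simp only [InvImage]
  rw [hRR' _ _ a.1.2 b.1.2]

theorem exists_isChordDiagramOn {s : Finset V} (h : IsCircleGraph (G.induce (s : Set V))) :
    ∃ R, IsChordDiagramOn G s R := by
  classical
  obtain ⟨f, -, hf⟩ := (isCircleGraph_iff_isIndContained.1 h).exists_isChordDiagram
  have hinj : Injective (Prod.map Subtype.val id : ↥(s : Set V) × Bool → V × Bool) :=
    Subtype.val_injective.prodMap injective_id
  refine ⟨fun p => decide (extend (Prod.map Subtype.val id) f 0 p.1 ≤
    extend (Prod.map Subtype.val id) f 0 p.2), ?_⟩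
  unfold IsChordDiagramOn
  convert hf using 1
  ext a b
  simp [InvImage, hinj.extend_apply]

end FiniteStages

/-- A countable graph all of whose finite induced subgraphs are circle
graphs is itself a circle graph. -/
theorem isCircleGraph_of_finite_subgraphs {V : Type} [Countable V] (G : SimpleGraph V)
    (h : ∀ s : Finset V, IsCircleGraph (G.induce (s : Set V))) :
    IsCircleGraph G := by
  obtain ⟨R, hR⟩ := exists_forall_of_forall_finset (IsChordDiagramOn G)
    (fun _ _ hst _ => IsChordDiagramOn.mono hst)
    (fun s => ⟨(s ×ˢ .univ) ×ˢ (s ×ˢ .univ), fun _ _ hRR' =>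
      IsChordDiagramOn.congr fun a b ha hb => hRR' (by simp [ha, hb])⟩)
    (fun s => exists_isChordDiagramOn (h s))
  exact isCircleGraph_iff_isIndContained.2
    (IsChordDiagram.of_forall_finset hR).isIndContained_circleGraph
end
end

section
/- Let R be a graph satisfying the extension property, and let v be a vertex of R. Then the local complementation R_v also satisfies the extension property. -/
noncomputable section

/-- Local complementation of a graph at a vertex `v`: adjacency is complemented within
the neighbourhood of `v` and unchanged elsewhere. -/
def localComplement {V : Type*} (G : SimpleGraph V) (v : V) : SimpleGraph V where
  Adj u w := u ≠ w ∧
    ((G.Adj v u ∧ G.Adj v w ∧ ¬ G.Adj u w) ∨ (¬ (G.Adj v u ∧ G.Adj v w) ∧ G.Adj u w))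
  symm := by
    constructor
    rintro u w ⟨huw, h⟩
    refine ⟨huw.symm, ?_⟩
    rcases h with ⟨h1, h2, h3⟩ | ⟨h1, h2⟩
    · exact Or.inl ⟨h2, h1, fun h' => h3 h'.symm⟩
    · exact Or.inr ⟨fun ⟨a, b⟩ => h1 ⟨b, a⟩, h2.symm⟩
  loopless := by
    constructor
    rintro u ⟨h, -⟩
    exact h rfl

/-- A graph satisfies the extension property (characterising the Rado graph among
countable graphs) if for any two disjoint finite vertex sets `U`, `W` there is a vertex
outside `U ∪ W` adjacent to everything in `U` and to nothing in `W`. -/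
def HasExtensionProperty {V : Type*} (G : SimpleGraph V) : Prop :=
  ∀ U W : Finset V, Disjoint U W →
    ∃ x, x ∉ U ∧ x ∉ W ∧ (∀ u ∈ U, G.Adj x u) ∧ (∀ w ∈ W, ¬ G.Adj x w)

theorem localComplement_adj_iff {V : Type*} (G : SimpleGraph V) (v x u : V) :
    (localComplement G v).Adj x u ↔ x ≠ u ∧ Xor (G.Adj x u) (G.Adj v x ∧ G.Adj v u) := by
  simp only [localComplement, xor_def]
  tauto

theorem hasExtensionProperty_iff_forall_exists_adj_iff {V : Type*} (G : SimpleGraph V) :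
    HasExtensionProperty G ↔
      ∀ (T : Finset V) (p : V → Prop), ∃ x ∉ T, ∀ t ∈ T, G.Adj x t ↔ p t := by
  classical
  constructor
  · intro hG T p
    obtain ⟨x, hxU, hxW, hU, hW⟩ :=
      hG (T.filter p) (T.filter (¬ p ·)) (Finset.disjoint_filter_filter_not T T p)
    refine ⟨x, fun hxT => ?_, fun t ht => ?_⟩
    · by_cases hpx : p x
      exacts [hxU (Finset.mem_filter.2 ⟨hxT, hpx⟩), hxW (Finset.mem_filter.2 ⟨hxT, hpx⟩)]
    · by_cases hpt : p t
      · exact iff_of_true (hU t (Finset.mem_filter.2 ⟨ht, hpt⟩)) hpt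
      · exact iff_of_false (hW t (Finset.mem_filter.2 ⟨ht, hpt⟩)) hpt
  · intro hG U W hUW
    obtain ⟨x, hx, hadj⟩ := hG (U ∪ W) (· ∈ U)
    refine ⟨x, fun h => hx (Finset.mem_union_left W h), fun h => hx (Finset.mem_union_right U h),
      fun u hu => (hadj u (Finset.mem_union_left W hu)).2 hu, fun w hw => ?_⟩
    rw [hadj w (Finset.mem_union_right U hw)]
    exact Finset.disjoint_right.1 hUW hw

/-- Local complementation preserves the extension property. -/
theorem localComplement_hasExtensionProperty {V : Type*} (G : SimpleGraph V)
    (hG : HasExtensionProperty G) (v : V) :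
    HasExtensionProperty (localComplement G v) := by
  classical
  rw [hasExtensionProperty_iff_forall_exists_adj_iff] at hG ⊢
  intro T p
  -- Make `x` adjacent to `v` exactly when `p v`, and pre-flip its adjacencies to the
  -- neighbours of `v` in that case, since the local complementation will flip them back.
  obtain ⟨x, hx, hadj⟩ := hG (insert v T) fun t => Xor (p t) (p v ∧ G.Adj v t)
  have hvx : G.Adj v x ↔ p v := by
    simpa [G.adj_comm, xor_def] using hadj v (Finset.mem_insert_self v T)
  refine ⟨x, fun hxT => hx (Finset.mem_insert_of_mem hxT), fun t ht => ?_⟩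
  have hxt : x ≠ t := fun h => hx (h ▸ Finset.mem_insert_of_mem ht)
  rw [localComplement_adj_iff, and_iff_right hxt, hadj t (Finset.mem_insert_of_mem ht), hvx]
  simp only [xor_def]
  tauto
end
end

section
/- The canonical map π from the homeomorphism group of S¹ to the automorphism group of the circle graph 𝒞, sending a homeomorphism g to the permutation of chords induced by applying g to endpoints, is an injective group homomorphism. -/
noncomputable section

/-! A homeomorphism of the circle preserves the relation "`c` and `d` lie in different
components of `S¹ \ {a, b}`". For points of the circle with `a ≠ b` this relation says exactly
that the chords `ab` and `cd` meet. To see this, write the points as `exp (iθ)`: the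
orientation of `exp (ix), exp (iy), exp (iz)` is
`4 sin ((y - x) / 2) sin ((z - y) / 2) sin ((z - x) / 2)`, so its sign is read off the cyclic order of the angles, and the sides of the lines `ab` and `cd`
on which the remaining endpoints lie decide whether the segments meet. Injectivity holds because
a chord determines its pair of endpoints and every point lies on two chords with distinct other
endpoints. -/

open Set Function

/-- Twice the signed area of the triangle `a b z`: positive iff `a, b, z` are in
counterclockwise order. -/
def orient (a b z : ℂ) : ℝ := (b.re - a.re) * (z.im - a.im) - (b.im - a.im) * (z.re - a.re)

@[simp] lemma orient_self (a z : ℂ) : orient a a z = 0 := by simp [orient]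
@[simp] lemma orient_self_left (a b : ℂ) : orient a b a = 0 := by simp [orient]
@[simp] lemma orient_self_right (a b : ℂ) : orient a b b = 0 := by simp only [orient]; ring

lemma orient_swap (a b z : ℂ) : orient b a z = -orient a b z := by simp only [orient]; ring
lemma orient_swap_right (a b z : ℂ) : orient a z b = -orient a b z := by simp only [orient]; ring

lemma continuous_orient (a b : ℂ) : Continuous (orient a b) := by unfold orient; fun_prop

lemma orient_mem_segment (a b : ℂ) {c d z : ℂ} (hz : z ∈ segment ℝ c d) :
    orient a b z ∈ segment ℝ (orient a b c) (orient a b d) := by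
  obtain ⟨s, t, hs, ht, hst, rfl⟩ := hz
  refine ⟨s, t, hs, ht, hst, ?_⟩
  simp only [orient, smul_eq_mul, Complex.add_re, Complex.add_im, Complex.real_smul,
    Complex.mul_re, Complex.mul_im, Complex.ofReal_re, Complex.ofReal_im]
  linear_combination (a.re * b.im - b.re * a.im) * hst

lemma disjoint_segment_of_orient_neg {a b c d : ℂ} (hc : orient a b c < 0)
    (hd : orient a b d < 0) : Disjoint (segment ℝ a b) (segment ℝ c d) := by
  refine Set.disjoint_left.2 fun z hab hcd => ?_
  have hzero : orient a b z = 0 := by simpa using orient_mem_segment a b hab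
  have hneg : orient a b z < 0 :=
    (convex_Iio 0).segment_subset hc hd (orient_mem_segment a b hcd)
  exact hneg.ne hzero

lemma segment_inter_nonempty_of_orient {a b c d : ℂ} (hc : orient a b c < 0)
    (hd : 0 < orient a b d) (ha : 0 < orient c d a) (hb : orient c d b < 0) :
    (segment ℝ a b ∩ segment ℝ c d).Nonempty := by
  -- Cramer's rule for the intersection of the lines `ab` and `cd`
  set s := orient c d a / (orient c d a - orient c d b)
  set t := orient a b c / (orient a b c - orient a b d)
  have hs : s ∈ Icc (0 : ℝ) 1 :=
    ⟨div_nonneg ha.le (by linarith), (div_le_one (by linarith)).2 (by linarith)⟩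
  have ht : t ∈ Icc (0 : ℝ) 1 :=
    ⟨div_nonneg_of_nonpos hc.le (by linarith),
      (div_le_one_of_neg (by linarith)).2 (by linarith)⟩
  rw [segment_eq_image', segment_eq_image']
  refine ⟨a + s • (b - a), ⟨s, hs, rfl⟩, ⟨t, ht, ?_⟩⟩
  have h1 : orient c d a - orient c d b ≠ 0 := by linarith
  have h2 : orient a b c - orient a b d ≠ 0 := by linarith
  simp only [s, t, orient] at h1 h2 ⊢
  apply Complex.ext <;>
  · simp only [Complex.add_re, Complex.add_im, Complex.real_smul, Complex.sub_re, Complex.sub_im,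
      Complex.mul_re, Complex.mul_im, Complex.ofReal_re, Complex.ofReal_im]
    field_simp
    ring

/-- Removing `a` and `b` disconnects `c` from `d`; this holds in particular when `c` or `d` is
`a` or `b`. -/
def Separates {X : Type*} [TopologicalSpace X] (a b c d : X) : Prop :=
  d ∉ connectedComponentIn ({a, b}ᶜ : Set X) c

section Separates

variable {X Y : Type*} [TopologicalSpace X] [TopologicalSpace Y]

lemma separates_comm {a b c d : X} : Separates b a c d ↔ Separates a b c d := by
  rw [Separates, Separates, pair_comm]

lemma separates_of_mem {a b c d : X} (h : c ∈ ({a, b} : Set X) ∨ d ∈ ({a, b} : Set X)) :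
    Separates a b c d := by
  intro hd
  have hc : c ∈ ({a, b}ᶜ : Set X) := fun hc => by
    rwa [connectedComponentIn_eq_empty (not_not_intro hc)] at hd
  rcases h with h | h
  exacts [hc h, connectedComponentIn_subset _ _ hd h]

lemma Homeomorph.apply_mem_connectedComponentIn_image_iff (g : X ≃ₜ Y) {F : Set X} {x y : X} :
    g y ∈ connectedComponentIn (g '' F) (g x) ↔ y ∈ connectedComponentIn F x := by
  by_cases hx : x ∈ F
  · rw [← g.image_connectedComponentIn hx, g.injective.mem_set_image]
  · rw [connectedComponentIn_eq_empty hx, connectedComponentIn_eq_empty (by simpa using hx)]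
    simp

lemma Homeomorph.separates_iff (g : X ≃ₜ Y) {a b c d : X} :
    Separates (g a) (g b) (g c) (g d) ↔ Separates a b c d := by
  rw [Separates, Separates, ← image_pair, ← image_compl_eq g.bijective,
    g.apply_mem_connectedComponentIn_image_iff]

end Separates

section Circle

open Real

def expI (θ : ℝ) : S1 := ⟨Complex.exp (θ * Complex.I), Complex.norm_exp_ofReal_mul_I θ⟩

lemma continuous_expI : Continuous expI := by unfold expI; fun_prop

lemma expI_periodic : Periodic expI (2 * π) := fun θ => by
  simp only [expI, Complex.ofReal_add, Complex.ofReal_mul, add_mul, Complex.exp_add]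
  push_cast
  simp

lemma exists_expI_eq (z : S1) (α : ℝ) : ∃ ε ∈ Ico 0 (2 * π), expI (α + ε) = z := by
  have hz : expI (Complex.arg z) = z := Subtype.ext <| by
    simpa [expI, show ‖(z : ℂ)‖ = 1 from z.2] using Complex.norm_mul_exp_arg_mul_I (z : ℂ)
  refine ⟨toIcoMod two_pi_pos α (Complex.arg z) - α, ?_, ?_⟩
  · have := toIcoMod_mem_Ico two_pi_pos α (Complex.arg z)
    constructor <;> linarith [this.1, this.2]
  · rw [add_sub_cancel, toIcoMod, expI_periodic.sub_zsmul_eq, hz]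

lemma exists_expI_eq_of_ne {z : S1} {α : ℝ} (hz : z ≠ expI α) :
    ∃ ε ∈ Ioo 0 (2 * π), expI (α + ε) = z := by
  obtain ⟨ε, hε, rfl⟩ := exists_expI_eq z α
  refine ⟨ε, ⟨hε.1.lt_of_ne ?_, hε.2⟩, rfl⟩
  rintro rfl
  exact hz (by rw [add_zero])

lemma expI_surjective : Surjective expI := fun z =>
  let ⟨ε, _, h⟩ := exists_expI_eq z 0
  ⟨0 + ε, h⟩

lemma sin_two_mul_add_sin_two_mul_sub_sin (A B : ℝ) :
    sin (2 * A) + sin (2 * B) - sin (2 * (A + B)) = 4 * sin A * sin B * sin (A + B) := by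
  rw [mul_add, sin_add, sin_two_mul, sin_two_mul, cos_two_mul, cos_two_mul, sin_add]
  linear_combination (-4 * sin A * cos A) * sin_sq_add_cos_sq B
    + (-4 * sin B * cos B) * sin_sq_add_cos_sq A

lemma orient_expI (x y z : ℝ) :
    orient (expI x) (expI y) (expI z) =
      4 * sin ((y - x) / 2) * sin ((z - y) / 2) * sin ((z - x) / 2) := by
  have h := sin_two_mul_add_sin_two_mul_sub_sin ((y - x) / 2) ((z - y) / 2)
  rw [show 2 * ((y - x) / 2) = y - x by ring, show 2 * ((z - y) / 2) = z - y by ring,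
    show 2 * ((y - x) / 2 + (z - y) / 2) = z - x by ring,
    show (y - x) / 2 + (z - y) / 2 = (z - x) / 2 by ring] at h
  rw [← h]
  simp only [orient, expI, Complex.exp_ofReal_mul_I_re, Complex.exp_ofReal_mul_I_im, sin_sub]
  ring

lemma orient_expI_pos {x y z : ℝ} (hxy : x < y) (hyz : y < z) (hzx : z < x + 2 * π) :
    0 < orient (expI x) (expI y) (expI z) := by
  have sin_half_pos : ∀ {u v : ℝ}, u < v → v < u + 2 * π → 0 < sin ((v - u) / 2) :=
    fun huv hvu => sin_pos_of_pos_of_lt_pi (by linarith) (by linarith)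
  rw [orient_expI]
  have := sin_half_pos hxy (by linarith)
  have := sin_half_pos hyz (by linarith)
  have := sin_half_pos (hxy.trans hyz) hzx
  positivity

lemma orient_expI_neg {x y z : ℝ} (hxz : x < z) (hzy : z < y) (hyx : y < x + 2 * π) :
    orient (expI x) (expI y) (expI z) < 0 := by
  rw [← neg_pos, ← orient_swap_right]
  exact orient_expI_pos hxz hzy hyx

lemma eq_or_eq_of_orient_eq_zero {a b z : S1} (hab : a ≠ b) (h : orient a b z = 0) :
    z = a ∨ z = b := by
  obtain ⟨α, rfl⟩ := expI_surjective a
  obtain ⟨δ, hδ, rfl⟩ := exists_expI_eq_of_ne hab.symm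
  by_contra! hne
  obtain ⟨ε, hε, rfl⟩ := exists_expI_eq_of_ne hne.1
  rcases lt_or_gt_of_ne (show ε ≠ δ by rintro rfl; exact hne.2 rfl) with hεδ | hδε
  · have := orient_expI_neg (x := α) (y := α + δ) (z := α + ε)
      (by linarith [hε.1]) (by linarith) (by linarith [hδ.2])
    linarith
  · have := orient_expI_pos (x := α) (y := α + δ) (z := α + ε)
      (by linarith [hδ.1]) (by linarith) (by linarith [hε.2])
    linarith

lemma separates_of_orient {a b c d : S1} (hab : a ≠ b) (hc : orient a b c < 0)
    (hd : 0 < orient a b d) : Separates a b c d := by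
  intro hmem
  have hcF : c ∈ ({a, b}ᶜ : Set S1) := by
    rintro (rfl | rfl) <;> simp at hc
  obtain ⟨t, ht, hzero⟩ := isPreconnected_connectedComponentIn.intermediate_value
    (mem_connectedComponentIn hcF) hmem
    ((continuous_orient a b).comp continuous_subtype_val).continuousOn ⟨hc.le, hd.le⟩
  exact connectedComponentIn_subset _ _ ht (eq_or_eq_of_orient_eq_zero hab hzero)

lemma not_separates_of_angles {α δ ε₁ ε₂ : ℝ} (hδ : δ < 2 * π) (h₁ : ε₁ ∈ Ioo 0 δ)
    (h₂ : ε₂ ∈ Ioo 0 δ) :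
    ¬ Separates (expI α) (expI (α + δ)) (expI (α + ε₁)) (expI (α + ε₂)) := by
  have harc : uIcc (α + ε₁) (α + ε₂) ⊆ Ioo α (α + δ) :=
    ordConnected_Ioo.uIcc_subset ⟨by linarith [h₁.1], by linarith [h₁.2]⟩
      ⟨by linarith [h₂.1], by linarith [h₂.2]⟩
  have havoid : expI '' uIcc (α + ε₁) (α + ε₂) ⊆ {expI α, expI (α + δ)}ᶜ := by
    rintro _ ⟨θ, hθ, rfl⟩ hmem
    have := orient_expI_neg (y := α + δ) (harc hθ).1 (harc hθ).2 (by linarith)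
    rcases hmem with h | h <;> rw [h] at this <;> simp at this
  have harc_conn : IsPreconnected (expI '' uIcc (α + ε₁) (α + ε₂)) :=
    isPreconnected_uIcc.image _ continuous_expI.continuousOn
  exact not_not_intro <| harc_conn.subset_connectedComponentIn
    (mem_image_of_mem _ left_mem_uIcc) havoid (mem_image_of_mem _ right_mem_uIcc)

lemma segment_inter_nonempty_iff_separates_of_angles {α δ ε₁ ε₂ : ℝ} (hδ : δ < 2 * π)
    (h₁ : ε₁ ∈ Ioo 0 δ) (h₂ : ε₂ ∈ Ioo 0 (2 * π)) (h₂δ : ε₂ ≠ δ) :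
    (segment ℝ (expI α : ℂ) (expI (α + δ)) ∩
        segment ℝ (expI (α + ε₁) : ℂ) (expI (α + ε₂))).Nonempty ↔
      Separates (expI α) (expI (α + δ)) (expI (α + ε₁)) (expI (α + ε₂)) := by
  obtain ⟨h₁0, h₁δ⟩ := h₁
  obtain ⟨h₂0, h₂2π⟩ := h₂
  have hc : orient (expI α) (expI (α + δ)) (expI (α + ε₁)) < 0 :=
    orient_expI_neg (by linarith) (by linarith) (by linarith)
  rcases lt_or_gt_of_ne h₂δ with hlt | hgt
  · have hd : orient (expI α) (expI (α + δ)) (expI (α + ε₂)) < 0 :=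
      orient_expI_neg (by linarith) (by linarith) (by linarith)
    exact iff_of_false (not_nonempty_iff_eq_empty.2 (disjoint_segment_of_orient_neg hc hd).inter_eq)
      (not_separates_of_angles hδ ⟨h₁0, h₁δ⟩ ⟨h₂0, hlt⟩)
  · have hd : 0 < orient (expI α) (expI (α + δ)) (expI (α + ε₂)) :=
      orient_expI_pos (by linarith) (by linarith) (by linarith)
    refine iff_of_true (segment_inter_nonempty_of_orient hc hd ?_ ?_) ?_
    · rw [← expI_periodic α]
      exact orient_expI_pos (by linarith) (by linarith) (by linarith)
    · exact orient_expI_neg (by linarith) (by linarith) (by linarith)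
    · exact separates_of_orient (fun h => by simp [h] at hc) hc hd

lemma segment_inter_nonempty_iff_separates_of_orient_neg {a b c d : S1} (hab : a ≠ b)
    (hc : orient a b c < 0) (hda : d ≠ a) (hdb : d ≠ b) :
    (segment ℝ (a : ℂ) b ∩ segment ℝ (c : ℂ) d).Nonempty ↔ Separates a b c d := by
  obtain ⟨α, rfl⟩ := expI_surjective a
  obtain ⟨δ, hδ, rfl⟩ := exists_expI_eq_of_ne hab.symm
  obtain ⟨ε₂, hε₂, rfl⟩ := exists_expI_eq_of_ne hda
  obtain ⟨ε₁, hε₁, rfl⟩ :=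
    exists_expI_eq_of_ne (z := c) (α := α) (fun h => by simp [h] at hc)
  refine segment_inter_nonempty_iff_separates_of_angles hδ.2 ⟨hε₁.1, ?_⟩ hε₂
    (by rintro rfl; exact hdb rfl)
  by_contra! hδε₁
  rcases hδε₁.eq_or_lt with rfl | hlt
  · simp at hc
  · linarith [orient_expI_pos (x := α) (y := α + δ) (z := α + ε₁)
      (by linarith [hδ.1]) (by linarith) (by linarith [hε₁.2])]

theorem segment_inter_nonempty_iff_separates {a b c d : S1} (hab : a ≠ b) :
    (segment ℝ (a : ℂ) b ∩ segment ℝ (c : ℂ) d).Nonempty ↔ Separates a b c d := by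
  by_cases hmem : c ∈ ({a, b} : Set S1) ∨ d ∈ ({a, b} : Set S1)
  · refine iff_of_true ?_ (separates_of_mem hmem)
    rcases hmem with (rfl | rfl) | (rfl | rfl)
    exacts [⟨c, left_mem_segment _ _ _, left_mem_segment _ _ _⟩,
      ⟨c, right_mem_segment _ _ _, left_mem_segment _ _ _⟩,
      ⟨d, left_mem_segment _ _ _, right_mem_segment _ _ _⟩,
      ⟨d, right_mem_segment _ _ _, right_mem_segment _ _ _⟩]
  simp only [mem_insert_iff, mem_singleton_iff, not_or] at hmem
  obtain ⟨⟨hca, hcb⟩, hda, hdb⟩ := hmem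
  rcases lt_trichotomy (orient a b c) 0 with hneg | hzero | hpos
  · exact segment_inter_nonempty_iff_separates_of_orient_neg hab hneg hda hdb
  · exact ((eq_or_eq_of_orient_eq_zero hab hzero).elim hca hcb).elim
  · rw [segment_symm, ← separates_comm]
    exact segment_inter_nonempty_iff_separates_of_orient_neg hab.symm
      (by rwa [orient_swap, neg_lt_zero]) hdb hda

lemma exists_ne_ne (a : S1) : ∃ b c : S1, b ≠ a ∧ c ≠ a ∧ b ≠ c := by
  obtain ⟨α, rfl⟩ := expI_surjective a
  have hpos := orient_expI_pos (x := α) (y := α + 2 * π / 3) (z := α + 4 * π / 3)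
    (by linarith [pi_pos]) (by linarith [pi_pos]) (by linarith [pi_pos])
  refine ⟨expI (α + 2 * π / 3), expI (α + 4 * π / 3), ?_, ?_, ?_⟩ <;>
    intro h <;> rw [h] at hpos <;> simp at hpos

end Circle

section extendCircle

open Classical

/-- The homeomorphism `g` of the circle extended by the identity off the circle, so that it acts
on `Sym2 ℂ`. -/
def extendCircle (g : S1 ≃ₜ S1) : Equiv.Perm ℂ :=
  Equiv.Perm.subtypeCongr g.toEquiv (Equiv.refl _)

lemma extendCircle_coe (g : S1 ≃ₜ S1) (a : S1) : extendCircle g a = g a :=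
  Equiv.Perm.subtypeCongr.left_apply_subtype _ _ a

lemma extendCircle_refl : extendCircle (Homeomorph.refl S1) = Equiv.refl ℂ :=
  Equiv.Perm.subtypeCongr.refl

lemma extendCircle_trans (f g : S1 ≃ₜ S1) :
    extendCircle (f.trans g) = (extendCircle f).trans (extendCircle g) := by
  simp only [extendCircle, Equiv.Perm.subtypeCongr.trans]; rfl

end extendCircle

lemma apply_eq_of_sym2_mk_eq {α β : Type*} {f g : α → β} (hg : Injective g) {a b c : α}
    (hbc : b ≠ c) (hb : s(f a, f b) = s(g a, g b)) (hc : s(f a, f c) = s(g a, g c)) :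
    f a = g a := by
  rw [Sym2.eq_iff] at hb hc
  rcases hb with ⟨h, -⟩ | ⟨hb, -⟩
  · exact h
  rcases hc with ⟨h, -⟩ | ⟨hc, -⟩
  · exact h
  exact absurd (hg (hb.symm.trans hc)) hbc

lemma chordSegment_mk (x y : ℂ) : chordSegment s(x, y) = segment ℝ x y := rfl

namespace Chord

def ofPair (a b : S1) (hab : a ≠ b) : Chord :=
  ⟨s(a, b), by simp [Subtype.coe_injective.ne hab]⟩

lemma exists_eq_mk (C : Chord) : ∃ a b : S1, a ≠ b ∧ C.1 = s((a : ℂ), (b : ℂ)) := by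
  obtain ⟨p, hS1, hdiag⟩ := C
  induction p using Sym2.ind with
  | _ x y =>
    refine ⟨⟨x, hS1 x (by simp)⟩, ⟨y, hS1 y (by simp)⟩, fun h => hdiag ?_, rfl⟩
    simpa using congrArg Subtype.val h

def map (g : S1 ≃ₜ S1) (C : Chord) : Chord :=
  ⟨C.1.map (extendCircle g),
    fun _ hz => by
      obtain ⟨z, hzC, rfl⟩ := Sym2.mem_map.1 hz
      exact extendCircle_coe g ⟨z, C.2.1 z hzC⟩ ▸ (g ⟨z, C.2.1 z hzC⟩).2,
    (Sym2.isDiag_map (extendCircle g).injective).not.2 C.2.2⟩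

lemma map_val_of_eq (g : S1 ≃ₜ S1) {C : Chord} {a b : S1} (h : C.1 = s((a : ℂ), (b : ℂ))) :
    (C.map g).1 = s((g a : ℂ), (g b : ℂ)) := by
  simp only [map, h, Sym2.map_mk, extendCircle_coe]

lemma map_refl (C : Chord) : C.map (Homeomorph.refl S1) = C :=
  Subtype.ext <| by simp [map, extendCircle_refl]

lemma map_trans (f g : S1 ≃ₜ S1) (C : Chord) : C.map (f.trans g) = (C.map f).map g :=
  Subtype.ext <| by simp [map, extendCircle_trans, Sym2.map_map]

def mapEquiv (g : S1 ≃ₜ S1) : Chord ≃ Chord where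
  toFun := map g
  invFun := map g.symm
  left_inv C := by rw [← map_trans, Homeomorph.self_trans_symm, map_refl]
  right_inv C := by rw [← map_trans, Homeomorph.symm_trans_self, map_refl]

lemma map_injective (g : S1 ≃ₜ S1) : Injective (map g) :=
  (mapEquiv g).injective

lemma circleGraph_adj_map_iff (g : S1 ≃ₜ S1) {C D : Chord} :
    CircleGraph.Adj (C.map g) (D.map g) ↔ CircleGraph.Adj C D := by
  obtain ⟨a, b, hab, hC⟩ := C.exists_eq_mk
  obtain ⟨c, d, -, hD⟩ := D.exists_eq_mk
  simp only [CircleGraph]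
  rw [map_val_of_eq g hC, map_val_of_eq g hD, hC, hD, chordSegment_mk, chordSegment_mk,
    chordSegment_mk, chordSegment_mk, segment_inter_nonempty_iff_separates hab,
    segment_inter_nonempty_iff_separates (g.injective.ne hab), g.separates_iff,
    (map_injective g).ne_iff]

end Chord

def circleGraphIso (g : S1 ≃ₜ S1) : CircleGraph ≃g CircleGraph where
  toEquiv := Chord.mapEquiv g
  map_rel_iff' := Chord.circleGraph_adj_map_iff g

/-- The canonical map `π` from the homeomorphism group of the circle
to the automorphism group of the circle graph (acting on chords via endpoints) is an
injective group homomorphism. -/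
theorem circle_homeo_to_circleGraph_aut_injective :
    ∃ π : (S1 ≃ₜ S1) → (CircleGraph ≃g CircleGraph),
      (∀ (g : S1 ≃ₜ S1) (a b : S1) (C : Chord),
        C.1 = s((a : ℂ), (b : ℂ)) → (π g C).1 = s((g a : ℂ), (g b : ℂ))) ∧
      (∀ f g : S1 ≃ₜ S1, π (f.trans g) = (π f).trans (π g)) ∧
      Function.Injective π := by
  refine ⟨circleGraphIso, fun g a b C hC => Chord.map_val_of_eq g hC,
    fun f g => RelIso.ext (Chord.map_trans f g), fun f g hfg => ?_⟩
  have hpair (a b : S1) (hab : a ≠ b) :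
      s((f a : ℂ), (f b : ℂ)) = s((g a : ℂ), (g b : ℂ)) := by
    let C := Chord.ofPair a b hab
    rw [← Chord.map_val_of_eq f (C := C) rfl, ← Chord.map_val_of_eq g (C := C) rfl]
    exact congrArg (fun π => (π C).1) hfg
  ext a
  obtain ⟨b, c, hba, hca, hbc⟩ := exists_ne_ne a
  exact apply_eq_of_sym2_mk_eq (f := fun x => (f x : ℂ)) (Subtype.val_injective.comp g.injective)
    hbc (hpair a b hba.symm) (hpair a c hca.symm)
end
end
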